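/- arXiv:1106.4053 — 7 statements merged into one kernel-verified Lean document; each statement's English description precedes it below -/
import Mathlib

section
/- Let m ≥ 1, R > 1, and let 𝒜 = (A_n)_{n∈ℤ} be a sequence of linear isomorphisms of ℝ^m with ‖A_n‖ < R and ‖A_n⁻¹‖ < R for all n. Then for every γ ∈ (0,1), 𝒜 has property SG(γ) if and only if 𝒜 has property SG(0) (the bounded solution property). In particular the sublinear growth property and the bounded solution property are equivalent. -/
/-
SG(0) implies SG(γ) because `N ^ γ ≥ 1`. Conversely, SG(γ) bounds solutions on windows of
length `2n` by `M = L (2n) ^ γ`. Gluing such local solutions with a partition of unity by hat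
functions of half-width `n` gives a sequence bounded by `M` that solves the recurrence up to a
defect `≤ 2 R M / n`, of order `n ^ (γ - 1)`, hence `≤ 1/2` for `n` large. On a finite window
this makes the difference operator approximately surjective with bounds, and successive
approximation turns it into an exact solution bounded by `2 M`.
-/

noncomputable section

abbrev Euc (m : ℕ) := EuclideanSpace ℝ (Fin m)

/-- The cocycle `A_{k+l-1} ∘ ⋯ ∘ A_k`. -/
def Phi (m : ℕ) (A : ℤ → Euc m ≃L[ℝ] Euc m) (k : ℤ) : ℕ → Euc m → Euc m
  | 0 => fun v => v
  | l + 1 => fun v => A (k + l) (Phi m A k l v)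

/-- Slow growth property with exponent γ. -/
def SG (m : ℕ) (A : ℤ → Euc m ≃L[ℝ] Euc m) (γ : ℝ) : Prop :=
  ∃ L : ℝ, 0 < L ∧ ∀ (i : ℤ) (N : ℕ), 1 ≤ N →
    ∀ w : ℤ → Euc m, (∀ k : ℤ, i + 1 ≤ k → k ≤ i + N → ‖w k‖ ≤ 1) →
    ∃ v : ℤ → Euc m,
      (∀ k : ℤ, i ≤ k → k ≤ i + N - 1 → v (k + 1) = A k (v k) + w (k + 1)) ∧
      (∀ k : ℤ, i ≤ k → k ≤ i + N → ‖v k‖ ≤ L * (N : ℝ) ^ γ)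

/-- Exponential dichotomy on ℤ⁺ with witnessing subspaces Es, Eu. -/
def ExpDichPos (m : ℕ) (A : ℤ → Euc m ≃L[ℝ] Euc m)
    (Es Eu : ℤ → Submodule ℝ (Euc m)) : Prop :=
  ∃ C : ℝ, 0 < C ∧ ∃ lam : ℝ, lam ∈ Set.Ioo (0 : ℝ) 1 ∧
    (∀ k : ℤ, 0 ≤ k → IsCompl (Es k) (Eu k)) ∧
    (∀ k : ℤ, 0 ≤ k → (Es k).map ((A k : Euc m →L[ℝ] Euc m) : Euc m →ₗ[ℝ] Euc m) = Es (k + 1)) ∧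
    (∀ k : ℤ, 0 ≤ k → (Eu k).map ((A k : Euc m →L[ℝ] Euc m) : Euc m →ₗ[ℝ] Euc m) = Eu (k + 1)) ∧
    (∀ k : ℤ, 0 ≤ k → ∀ l : ℕ, 0 < l → ∀ v ∈ Es k,
      ‖Phi m A k l v‖ ≤ C * lam ^ l * ‖v‖) ∧
    (∀ k : ℤ, 0 ≤ k → ∀ l : ℕ, 0 < l → ∀ v ∈ Eu k,
      C⁻¹ * lam ^ (-(l : ℤ)) * ‖v‖ ≤ ‖Phi m A k l v‖)

/-- Exponential dichotomy on ℤ⁻ with witnessing subspaces Es, Eu. -/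
def ExpDichNeg (m : ℕ) (A : ℤ → Euc m ≃L[ℝ] Euc m)
    (Es Eu : ℤ → Submodule ℝ (Euc m)) : Prop :=
  ∃ C : ℝ, 0 < C ∧ ∃ lam : ℝ, lam ∈ Set.Ioo (0 : ℝ) 1 ∧
    (∀ k : ℤ, k ≤ 0 → IsCompl (Es k) (Eu k)) ∧
    (∀ k : ℤ, k < 0 → (Es k).map ((A k : Euc m →L[ℝ] Euc m) : Euc m →ₗ[ℝ] Euc m) = Es (k + 1)) ∧
    (∀ k : ℤ, k < 0 → (Eu k).map ((A k : Euc m →L[ℝ] Euc m) : Euc m →ₗ[ℝ] Euc m) = Eu (k + 1)) ∧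
    (∀ (k : ℤ) (l : ℕ), 0 < l → k + l ≤ 0 → ∀ v ∈ Es k,
      ‖Phi m A k l v‖ ≤ C * lam ^ l * ‖v‖) ∧
    (∀ (k : ℤ) (l : ℕ), 0 < l → k + l ≤ 0 → ∀ v ∈ Eu k,
      C⁻¹ * lam ^ (-(l : ℤ)) * ‖v‖ ≤ ‖Phi m A k l v‖)

open Filter Topology

section ApproximatePreimage

variable {X Y : Type*} [NormedAddCommGroup X] [NormedSpace ℝ X]
  [NormedAddCommGroup Y] [NormedSpace ℝ Y]

theorem LinearMap.exists_approx_preimage_of_unit_ball (T : X →ₗ[ℝ] Y) {M ε : ℝ}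
    (h : ∀ y, ‖y‖ ≤ 1 → ∃ x, ‖x‖ ≤ M ∧ ‖T x - y‖ ≤ ε) (y : Y) :
    ∃ x, ‖x‖ ≤ M * ‖y‖ ∧ ‖T x - y‖ ≤ ε * ‖y‖ := by
  rcases eq_or_ne y 0 with rfl | hy
  · exact ⟨0, by simp⟩
  have hy' : 0 < ‖y‖ := norm_pos_iff.mpr hy
  obtain ⟨x, hxM, hxε⟩ :=
    h (‖y‖⁻¹ • y) (by rw [norm_smul, norm_inv, norm_norm, inv_mul_cancel₀ hy'.ne'])
  refine ⟨‖y‖ • x, ?_, ?_⟩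
  · rw [norm_smul, norm_norm, mul_comm]
    exact mul_le_mul_of_nonneg_right hxM hy'.le
  · have : T (‖y‖ • x) - y = ‖y‖ • (T x - ‖y‖⁻¹ • y) := by
      rw [smul_sub, smul_inv_smul₀ hy'.ne', map_smul]
    rw [this, norm_smul, norm_norm, mul_comm]
    exact mul_le_mul_of_nonneg_right hxε hy'.le

-- Successive approximation, as in the proof of the open mapping theorem.
theorem ContinuousLinearMap.exists_preimage_norm_le_of_approx [CompleteSpace X]
    (T : X →L[ℝ] Y) {M : ℝ} (hM : 0 ≤ M)
    (h : ∀ y, ∃ x, ‖x‖ ≤ M * ‖y‖ ∧ ‖T x - y‖ ≤ 1 / 2 * ‖y‖) (y : Y) :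
    ∃ x, T x = y ∧ ‖x‖ ≤ 2 * M * ‖y‖ := by
  choose g hgM hgT using h
  let r : ℕ → Y := fun t => (fun z => z - T (g z))^[t] y
  have hr_succ (t : ℕ) : r (t + 1) = r t - T (g (r t)) := Function.iterate_succ_apply' _ _ _
  have hr_le (t : ℕ) : ‖r t‖ ≤ (1 / 2) ^ t * ‖y‖ := by
    induction t with
    | zero => simp [r]
    | succ t ih =>
      rw [hr_succ, ← norm_neg, neg_sub, pow_succ]
      linarith [hgT (r t)]
  have hx_le (t : ℕ) : ‖g (r t)‖ ≤ M * (1 / 2) ^ t * ‖y‖ := by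
    rw [mul_assoc]
    exact (hgM _).trans (mul_le_mul_of_nonneg_left (hr_le t) hM)
  have hsum : Summable fun t => g (r t) :=
    Summable.of_norm_bounded ((summable_geometric_two.mul_left M).mul_right ‖y‖) hx_le
  have hpartial (t : ℕ) : T (∑ u ∈ Finset.range t, g (r u)) = y - r t := by
    induction t with
    | zero => simp [r]
    | succ t ih => rw [Finset.sum_range_succ, map_add, ih, hr_succ]; abel
  refine ⟨∑' t, g (r t), ?_, ?_⟩
  · have hr_zero : Tendsto r atTop (𝓝 0) :=
      squeeze_zero_norm hr_le (by simpa using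
        (tendsto_pow_atTop_nhds_zero_of_lt_one (r := (1 / 2 : ℝ)) (by norm_num)
          (by norm_num)).mul_const ‖y‖)
    have := (T.continuous.tendsto _).comp hsum.hasSum.tendsto_sum_nat
    refine tendsto_nhds_unique this ?_
    simpa [Function.comp_def, hpartial] using tendsto_const_nhds.sub hr_zero
  · refine tsum_of_norm_bounded ?_ hx_le
    rw [mul_comm 2 M]
    exact (hasSum_geometric_two.mul_left M).mul_right ‖y‖

end ApproximatePreimage

section Tent

def tent (n : ℕ) (c k : ℤ) : ℝ := max 0 (1 - |(k - c : ℝ)| / n)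

variable {n : ℕ} {a c k : ℤ}

lemma tent_nonneg : 0 ≤ tent n c k := le_max_left _ _

lemma tent_le_one : tent n c k ≤ 1 :=
  max_le zero_le_one (sub_le_self _ (by positivity))

lemma tent_eq_zero_of_le_abs (hn : 0 < n) (h : (n : ℤ) ≤ |k - c|) : tent n c k = 0 := by
  have h' : (n : ℝ) ≤ |(k - c : ℝ)| := by exact_mod_cast h
  exact max_eq_left (sub_nonpos.mpr ((one_le_div (by positivity)).mpr h'))

lemma tent_add_tent_add_eq_one (hn : 0 < n) (h₀ : c ≤ k) (h₁ : k ≤ c + n) :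
    tent n c k + tent n (c + n) k = 1 := by
  have h₀' : (c : ℝ) ≤ k := by exact_mod_cast h₀
  have h₁' : (k : ℝ) ≤ c + n := by exact_mod_cast h₁
  have hn' : (0 : ℝ) < n := by exact_mod_cast hn
  unfold tent
  push_cast
  rw [abs_of_nonneg (by linarith), abs_of_nonpos (by linarith),
    max_eq_right (by rw [sub_nonneg, div_le_one hn']; linarith),
    max_eq_right (by rw [sub_nonneg, div_le_one hn']; linarith)]
  field_simp
  ring

lemma abs_tent_succ_sub_le : |tent n c (k + 1) - tent n c k| ≤ 1 / n := by
  unfold tent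
  rw [max_comm, max_comm 0]
  refine (abs_max_sub_max_le_abs _ _ _).trans ?_
  rw [sub_sub_sub_cancel_left, ← sub_div, abs_div, Nat.abs_cast]
  gcongr
  refine (abs_abs_sub_abs_le_abs_sub _ _).trans ?_
  push_cast
  ring_nf
  simp

lemma tent_mul_eq_zero_of_ne_of_ne (hn : 0 < n) {j : ℤ} (h₀ : a * n ≤ k) (h₁ : k ≤ a * n + n)
    (ha : j ≠ a) (ha' : j ≠ a + 1) : tent n (j * n) k = 0 := by
  apply tent_eq_zero_of_le_abs hn
  rcases lt_or_gt_of_ne ha with hj | hj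
  · have : j * n ≤ (a - 1) * n := by gcongr; omega
    rw [abs_of_nonneg (by linarith)]
    linarith
  · have : (a + 2) * n ≤ j * n := by gcongr; omega
    rw [abs_of_nonpos (by linarith)]
    linarith

lemma finsum_tent_mul_smul {E : Type*} [AddCommGroup E] [Module ℝ E] (hn : 0 < n) (f : ℤ → E)
    (h₀ : a * n ≤ k) (h₁ : k ≤ a * n + n) :
    ∑ᶠ j, tent n (j * n) k • f j =
      tent n (a * n) k • f a + (1 - tent n (a * n) k) • f (a + 1) := by
  have hsupp :
      (Function.support fun j => tent n (j * n) k • f j) ⊆ ({a, a + 1} : Finset ℤ) := by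
    intro j hj
    by_contra hne
    simp only [Finset.coe_insert, Finset.coe_singleton, Set.mem_insert_iff,
      Set.mem_singleton_iff, not_or] at hne
    simp [tent_mul_eq_zero_of_ne_of_ne hn h₀ h₁ hne.1 hne.2] at hj
  have hnext : tent n ((a + 1) * n) k = 1 - tent n (a * n) k := by
    rw [eq_sub_iff_add_eq', add_mul, one_mul]
    exact tent_add_tent_add_eq_one hn h₀ h₁
  rw [finsum_eq_sum_of_support_subset _ hsupp, Finset.sum_pair (by omega), hnext]

end Tent

lemma exists_nat_mul_rpow_le {γ : ℝ} (hγ : γ < 1) (C : ℝ) :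
    ∃ n : ℕ, 0 < n ∧ C * (n : ℝ) ^ γ ≤ n := by
  have hlim := (tendsto_rpow_atTop (sub_pos.mpr hγ)).comp tendsto_natCast_atTop_atTop
  obtain ⟨n, hC, hn⟩ := ((hlim.eventually_ge_atTop C).and (eventually_gt_atTop 0)).exists
  refine ⟨n, hn, ?_⟩
  calc C * (n : ℝ) ^ γ ≤ (n : ℝ) ^ (1 - γ) * (n : ℝ) ^ γ := by gcongr; exact hC
    _ = n := by rw [← Real.rpow_add (by positivity), sub_add_cancel, Real.rpow_one]

section Window

variable {E : Type*} [NormedAddCommGroup E]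

def ofWindow {n : ℕ} (i : ℤ) (x : Fin n → E) (k : ℤ) : E :=
  if h : 0 ≤ k - i ∧ (k - i).toNat < n then x ⟨(k - i).toNat, h.2⟩ else 0

lemma ofWindow_eq {n : ℕ} {i k : ℤ} (x : Fin n → E) (j : Fin n) (h : k = i + j) :
    ofWindow i x k = x j := by
  subst h
  simp [ofWindow]

lemma norm_ofWindow_le {n : ℕ} (i : ℤ) (x : Fin n → E) (k : ℤ) : ‖ofWindow i x k‖ ≤ ‖x‖ := by
  unfold ofWindow
  split_ifs
  · exact norm_le_pi_norm x _
  · simp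

variable [NormedSpace ℝ E]

theorem exists_approx_solution_of_local_solutions (A : ℤ → E →L[ℝ] E) {R M : ℝ} {n : ℕ}
    (hA : ∀ k, ‖A k‖ ≤ R) (hn : 0 < n)
    (hloc : ∀ (c : ℤ) (w : ℤ → E), (∀ k, ‖w k‖ ≤ 1) → ∃ v : ℤ → E,
      (∀ k, c - n ≤ k → k < c + n → v (k + 1) = A k (v k) + w (k + 1)) ∧
      ∀ k, c - n ≤ k → k ≤ c + n → ‖v k‖ ≤ M)
    (w : ℤ → E) (hw : ∀ k, ‖w k‖ ≤ 1) :
    ∃ V : ℤ → E, ∀ k, ‖V k‖ ≤ M ∧ ‖V (k + 1) - A k (V k) - w (k + 1)‖ ≤ 2 * R * M / n := by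
  choose v hv_rec hv_le using fun c => hloc c w hw
  refine ⟨fun k => ∑ᶠ j, tent n (j * n) k • v (j * n) k, fun k => ?_⟩
  set a := k / (n : ℤ)
  have h₀ : a * n ≤ k := Int.ediv_mul_le k (by omega)
  have h₁ : k < a * n + n := by
    have := Int.lt_ediv_add_one_mul_self k (b := n) (by omega)
    linarith
  have hva := hv_le (a * n) k (by linarith) (by linarith)
  have hvb := hv_le ((a + 1) * n) k (by linarith) (by linarith)
  have hR : 0 ≤ R := (norm_nonneg _).trans (hA 0)
  have hAv {x : E} (hx : ‖x‖ ≤ M) : ‖A k x‖ ≤ R * M :=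
    ((A k).le_opNorm x).trans (mul_le_mul (hA k) hx (norm_nonneg _) hR)
  simp only
  rw [finsum_tent_mul_smul hn _ h₀ h₁.le,
    finsum_tent_mul_smul (a := a) hn _ (by linarith) (by linarith),
    hv_rec (a * n) k (by linarith) (by linarith),
    hv_rec ((a + 1) * n) k (by linarith) (by linarith)]
  constructor
  · exact mem_closedBall_zero_iff.mp <| convex_closedBall 0 M
      (mem_closedBall_zero_iff.mpr hva) (mem_closedBall_zero_iff.mpr hvb)
      tent_nonneg (sub_nonneg.mpr tent_le_one) (add_sub_cancel _ _)
  · set θ := tent n (a * n) k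
    set θ' := tent n (a * n) (k + 1)
    have hdefect : θ' • (A k (v (a * n) k) + w (k + 1))
          + (1 - θ') • (A k (v ((a + 1) * n) k) + w (k + 1))
          - A k (θ • v (a * n) k + (1 - θ) • v ((a + 1) * n) k) - w (k + 1)
        = (θ' - θ) • (A k (v (a * n) k) - A k (v ((a + 1) * n) k)) := by
      rw [map_add, map_smul, map_smul]
      module
    rw [hdefect, norm_smul, Real.norm_eq_abs]
    calc |θ' - θ| * ‖A k (v (a * n) k) - A k (v ((a + 1) * n) k)‖
        ≤ 1 / n * (R * M + R * M) :=
          mul_le_mul abs_tent_succ_sub_le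
            ((norm_sub_le _ _).trans (add_le_add (hAv hva) (hAv hvb))) (norm_nonneg _)
            (by positivity)
      _ = 2 * R * M / n := by ring

-- A sequence on the sites `i, …, i + N` is stored as `x : Fin (N + 1) → E` with
-- `x j = v (i + j)`, so that the sup norm of `x` is the maximum of `‖v‖` over the window.
def windowDiff (A : ℤ → E →L[ℝ] E) (i : ℤ) (N : ℕ) : (Fin (N + 1) → E) →L[ℝ] (Fin N → E) :=
  ContinuousLinearMap.pi fun j =>
    ContinuousLinearMap.proj (φ := fun _ => E) j.succ -
      (A (i + j)).comp (ContinuousLinearMap.proj (φ := fun _ => E) j.castSucc)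

lemma windowDiff_apply (A : ℤ → E →L[ℝ] E) (i : ℤ) (N : ℕ) (x : Fin (N + 1) → E)
    (j : Fin N) :
    windowDiff A i N x j = x j.succ - A (i + j) (x j.castSucc) := rfl

theorem exists_bounded_solution_of_approx [CompleteSpace E] (A : ℤ → E →L[ℝ] E) {M : ℝ}
    (happrox : ∀ w : ℤ → E, (∀ k, ‖w k‖ ≤ 1) → ∃ V : ℤ → E,
      ∀ k, ‖V k‖ ≤ M ∧ ‖V (k + 1) - A k (V k) - w (k + 1)‖ ≤ 1 / 2)
    (i : ℤ) (N : ℕ) (w : ℤ → E) (hw : ∀ k, i + 1 ≤ k → k ≤ i + N → ‖w k‖ ≤ 1) :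
    ∃ v : ℤ → E, (∀ k, i ≤ k → k < i + N → v (k + 1) = A k (v k) + w (k + 1)) ∧
      ∀ k, i ≤ k → k ≤ i + N → ‖v k‖ ≤ 2 * M := by
  have hM : 0 ≤ M := by
    obtain ⟨V, hV⟩ := happrox 0 (by simp)
    exact (norm_nonneg _).trans (hV 0).1
  have hT (y : Fin N → E) (hy : ‖y‖ ≤ 1) :
      ∃ x, ‖x‖ ≤ M ∧ ‖windowDiff A i N x - y‖ ≤ 1 / 2 := by
    obtain ⟨V, hV⟩ := happrox (ofWindow (i + 1) y) fun k => (norm_ofWindow_le _ _ _).trans hy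
    refine ⟨fun j => V (i + j), (pi_norm_le_iff_of_nonneg hM).mpr fun j => (hV _).1,
      (pi_norm_le_iff_of_nonneg (by norm_num)).mpr fun j => ?_⟩
    have := (hV (i + j)).2
    rw [ofWindow_eq y j (by ring)] at this
    simpa [windowDiff_apply, add_assoc] using this
  let y : Fin N → E := fun j => w (i + j + 1)
  have hy : ‖y‖ ≤ 1 :=
    (pi_norm_le_iff_of_nonneg zero_le_one).mpr fun j => hw _ (by omega) (by omega)
  obtain ⟨x, hx, hx_le⟩ := (windowDiff A i N).exists_preimage_norm_le_of_approx hM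
    ((windowDiff A i N).toLinearMap.exists_approx_preimage_of_unit_ball hT) y
  refine ⟨ofWindow i x, fun k h₀ h₁ => ?_, fun k _ _ => ?_⟩
  · obtain ⟨j, rfl⟩ : ∃ j : Fin N, k = i + j :=
      ⟨⟨(k - i).toNat, by omega⟩, by simp; omega⟩
    have hj := congr_fun hx j
    rw [windowDiff_apply] at hj
    rw [ofWindow_eq x j.succ (by simp; ring), ofWindow_eq x j.castSucc (by simp)]
    exact sub_eq_iff_eq_add'.mp hj
  · calc ‖ofWindow i x k‖ ≤ 2 * M * ‖y‖ := (norm_ofWindow_le _ _ _).trans hx_le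
      _ ≤ 2 * M := mul_le_of_le_one_right (by positivity) hy

end Window

namespace SG

variable {m : ℕ} {A : ℤ → Euc m ≃L[ℝ] Euc m}

lemma mono {γ γ' : ℝ} (h : SG m A γ) (hγ : γ ≤ γ') : SG m A γ' := by
  obtain ⟨L, hL, hSG⟩ := h
  refine ⟨L, hL, fun i N hN w hw => ?_⟩
  obtain ⟨v, hrec, hle⟩ := hSG i N hN w hw
  refine ⟨v, hrec, fun k h₀ h₁ => (hle k h₀ h₁).trans ?_⟩
  gcongr
  exact_mod_cast hN

theorem zero_of_lt_one {γ R : ℝ} (h : SG m A γ) (hγ : γ < 1)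
    (hA : ∀ k, ‖(A k : Euc m →L[ℝ] Euc m)‖ ≤ R) : SG m A 0 := by
  obtain ⟨L, hL, hSG⟩ := h
  -- `n` is chosen so that the gluing defect `2 R M / n` below is at most `1 / 2`.
  obtain ⟨n, hn, hn_le⟩ := exists_nat_mul_rpow_le hγ (4 * R * L * 2 ^ γ)
  set M := L * (2 * n : ℝ) ^ γ with hM_def
  have hM : 0 < M := by positivity
  have hdefect : 2 * R * M / n ≤ 1 / 2 := by
    rw [div_le_iff₀ (by positivity), hM_def, Real.mul_rpow (by norm_num) (by positivity)]
    linarith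
  have hloc (c : ℤ) (w : ℤ → Euc m) (hw : ∀ k, ‖w k‖ ≤ 1) : ∃ v : ℤ → Euc m,
      (∀ k, c - n ≤ k → k < c + n → v (k + 1) = A k (v k) + w (k + 1)) ∧
      ∀ k, c - n ≤ k → k ≤ c + n → ‖v k‖ ≤ M := by
    obtain ⟨v, hrec, hle⟩ := hSG (c - n) (2 * n) (by omega) w fun k _ _ => hw k
    exact ⟨v, fun k h₀ h₁ => hrec k h₀ (by push_cast; omega),
      fun k h₀ h₁ => by simpa using hle k h₀ (by push_cast; omega)⟩
  have happrox (w : ℤ → Euc m) (hw : ∀ k, ‖w k‖ ≤ 1) : ∃ V : ℤ → Euc m,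
      ∀ k, ‖V k‖ ≤ M ∧ ‖V (k + 1) - A k (V k) - w (k + 1)‖ ≤ 1 / 2 :=
    (exists_approx_solution_of_local_solutions _ hA hn hloc w hw).imp
      fun V hV k => ⟨(hV k).1, (hV k).2.trans hdefect⟩
  refine ⟨2 * M, by positivity, fun i N _ w hw => ?_⟩
  obtain ⟨v, hrec, hle⟩ :=
    exists_bounded_solution_of_approx (fun k => (A k : Euc m →L[ℝ] Euc m)) happrox i N w hw
  exact ⟨v, fun k h₀ h₁ => hrec k h₀ (by omega), fun k h₀ h₁ => by simpa using hle k h₀ h₁⟩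

end SG

theorem sublinear_growth_iff_bounded_solution_general
    (m : ℕ) (R : ℝ)
    (A : ℤ → Euc m ≃L[ℝ] Euc m)
    (hAbound : ∀ n : ℤ, ‖(A n : Euc m →L[ℝ] Euc m)‖ < R ∧
      ‖((A n).symm : Euc m →L[ℝ] Euc m)‖ < R) :
    ∀ γ : ℝ, γ ∈ Set.Ioo (0 : ℝ) 1 → (SG m A γ ↔ SG m A 0) :=
  fun _ hγ =>
    ⟨fun h => h.zero_of_lt_one hγ.2 fun n => (hAbound n).1.le, fun h => h.mono hγ.1.le⟩

/-- Corollary of Theorems 3.4 and 3.5: for bounded sequences of isomorphisms,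
the sublinear growth property SG(γ) (γ ∈ (0,1)) is equivalent to the bounded
solution property SG(0). -/
theorem sublinear_growth_iff_bounded_solution
    (m : ℕ) (hm : 1 ≤ m) (R : ℝ) (hR : 1 < R)
    (A : ℤ → Euc m ≃L[ℝ] Euc m)
    (hAbound : ∀ n : ℤ, ‖(A n : Euc m →L[ℝ] Euc m)‖ < R ∧
      ‖((A n).symm : Euc m →L[ℝ] Euc m)‖ < R) :
    ∀ γ : ℝ, γ ∈ Set.Ioo (0 : ℝ) 1 → (SG m A γ ↔ SG m A 0) :=
  sublinear_growth_iff_bounded_solution_general m R A hAbound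
end
end

section
/- Let m ≥ 1, R > 1, and let 𝒜 = (A_n)_{n∈ℤ} be a sequence of linear isomorphisms of ℝ^m with ‖A_n‖ < R and ‖A_n⁻¹‖ < R for all n. Suppose 𝒜 has property SG(γ) for some γ ∈ (0,1), suppose 𝒜 has exponential dichotomy on ℤ⁺ witnessed by subspaces (E_k^{s,+}, E_k^{u,+})_{k≥0} and exponential dichotomy on ℤ⁻ witnessed by subspaces (E_k^{s,−}, E_k^{u,−})_{k≤0}. Then E_0^{s,+} + E_0^{u,−} = ℝ^m. -/
noncomputable section

/-!
If `Esp 0 + Eum 0` were a proper subspace, take a unit vector `z` orthogonal to it and apply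
the slow-growth property on the window `[-N, N]` to the single impulse `z` at time `0`. The
solution `v` is a genuine orbit on `[-N, 0)` and on `[0, N]`, `v 0 = Φ(-N, N) v(-N) + z`, and
all its values are `O(N^γ)`. Splitting `v 0` along the dichotomy on `ℤ⁺`, its unstable part
must be `O(λ^N N^γ)` for `Φ(0, N) v 0` to stay bounded, so `⟪z, v 0⟫` is small. Splitting
`v(-N)` along the dichotomy on `ℤ⁻`, the stable part shrinks to `O(λ^N N^γ)` by time `0` and
the unstable part lands in `Eum 0 ⊥ z`, so `⟪z, v 0⟫` is close to `‖z‖² = 1`. Exponential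
decay beats the power of `N`, so these are incompatible for large `N`.
-/

open Filter Topology
open scoped RealInnerProductSpace

theorem Submodule.exists_norm_eq_one_mem_orthogonal {𝕜 E : Type*} [RCLike 𝕜]
    [NormedAddCommGroup E] [InnerProductSpace 𝕜 E] {K : Submodule 𝕜 E}
    [K.HasOrthogonalProjection] (hK : K ≠ ⊤) : ∃ z ∈ Kᗮ, ‖z‖ = 1 := by
  obtain ⟨z, hzK, hz⟩ := Submodule.exists_mem_ne_zero_of_ne_bot
    (mt Submodule.orthogonal_eq_bot_iff.mp hK)
  exact ⟨(‖z‖⁻¹ : 𝕜) • z, Submodule.smul_mem _ _ hzK, norm_smul_inv_norm hz⟩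

theorem tendsto_rpow_mul_pow_atTop_nhds_zero (γ : ℝ) {r : ℝ} (h0 : 0 < r) (h1 : r < 1) :
    Tendsto (fun n : ℕ => (n : ℝ) ^ γ * r ^ n) atTop (𝓝 0) := by
  refine ((tendsto_rpow_mul_exp_neg_mul_atTop_nhds_zero γ (-Real.log r)
    (neg_pos.mpr (Real.log_neg h0 h1))).comp tendsto_natCast_atTop_atTop).congr fun n => ?_
  simp only [Function.comp_apply, neg_neg, mul_comm (Real.log r), Real.exp_nat_mul,
    Real.exp_log h0]

theorem tendsto_geom_mul_rpow_two_mul_add_one (C L γ : ℝ) {r : ℝ} (h0 : 0 < r) (h1 : r < 1) :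
    Tendsto (fun N : ℕ => C * r ^ N * (L * (2 * N : ℝ) ^ γ + 1)) atTop (𝓝 0) := by
  have h := ((tendsto_rpow_mul_pow_atTop_nhds_zero γ h0 h1).const_mul (C * L * 2 ^ γ)).add
    ((tendsto_pow_atTop_nhds_zero_of_lt_one h0.le h1).const_mul C)
  simp only [mul_zero, add_zero] at h
  refine h.congr fun N => ?_
  rw [Real.mul_rpow zero_le_two N.cast_nonneg]
  ring

section Cocycle

variable {m : ℕ} (A : ℤ → Euc m ≃L[ℝ] Euc m)

theorem Phi_add (k : ℤ) (l : ℕ) (x y : Euc m) :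
    Phi m A k l (x + y) = Phi m A k l x + Phi m A k l y := by
  induction l with
  | zero => rfl
  | succ l ih => simp only [Phi, ih, map_add]

theorem Phi_mem_of_map_le {E : ℤ → Submodule ℝ (Euc m)} {a : ℤ} {n : ℕ}
    (hE : ∀ k, a ≤ k → k < a + n → (E k).map ((A k : Euc m →L[ℝ] Euc m) : Euc m →ₗ[ℝ] Euc m)
      ≤ E (k + 1))
    {x : Euc m} (hx : x ∈ E a) : Phi m A a n x ∈ E (a + n) := by
  induction n with
  | zero => simpa [Phi] using hx
  | succ n ih =>
    have hstep := hE (a + n) (by omega) (by push_cast; omega)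
      (Submodule.mem_map_of_mem (ih fun k hk hkn => hE k hk (by push_cast; omega)))
    rwa [Nat.cast_succ, ← add_assoc]

theorem eq_Phi_of_forall_succ {v : ℤ → Euc m} {a : ℤ} {n : ℕ}
    (hv : ∀ k, a ≤ k → k < a + n → v (k + 1) = A k (v k)) :
    v (a + n) = Phi m A a n (v a) := by
  induction n with
  | zero => simp [Phi]
  | succ n ih =>
    rw [Nat.cast_succ, ← add_assoc, hv (a + n) (by omega) (by push_cast; omega),
      ih fun k hk hkn => hv k hk (by push_cast; omega)]
    rfl

end Cocycle

section Splitting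

variable {E F : Type*} [SeminormedAddCommGroup E] [SeminormedAddCommGroup F]
  {s u : E} {Ts Tu : F} {p a b : ℝ}

-- No bound on the angle between the two summands is needed: `p ≤ 1 / 2` absorbs the feedback
-- `‖s‖ ≤ a + ‖u‖`, which keeps the estimate uniform along the cocycle.
theorem norm_unstable_le_of_split (hp : 0 < p) (hp2 : p ≤ 1 / 2) (hs : ‖Ts‖ ≤ p * ‖s‖)
    (hu : p⁻¹ * ‖u‖ ≤ ‖Tu‖) (ha : ‖s + u‖ ≤ a) (hb : ‖Ts + Tu‖ ≤ b) :
    ‖u‖ ≤ 2 * p * (a + b) := by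
  have ha0 : 0 ≤ a := (norm_nonneg _).trans ha
  have hb0 : 0 ≤ b := (norm_nonneg _).trans hb
  have hs' : ‖s‖ ≤ a + ‖u‖ := by
    simpa using (norm_sub_le (s + u) u).trans (add_le_add_left ha _)
  have hTu : ‖Tu‖ ≤ b + p * (a + ‖u‖) := by
    calc ‖Tu‖ = ‖(Ts + Tu) - Ts‖ := by rw [add_sub_cancel_left]
      _ ≤ ‖Ts + Tu‖ + ‖Ts‖ := norm_sub_le _ _
      _ ≤ b + p * (a + ‖u‖) := add_le_add hb (hs.trans (by gcongr))
  have hu' : ‖u‖ ≤ p * (b + p * (a + ‖u‖)) := by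
    rw [inv_mul_le_iff₀ hp] at hu
    exact hu.trans (by gcongr)
  have hpp : p * p ≤ p / 2 := by nlinarith
  have hppa : p * p * a ≤ p / 2 * a := mul_le_mul_of_nonneg_right hpp ha0
  have hppu : p * p * ‖u‖ ≤ 1 / 4 * ‖u‖ :=
    mul_le_mul_of_nonneg_right (by nlinarith) (norm_nonneg u)
  nlinarith [mul_nonneg hp.le hb0, mul_nonneg hp.le ha0]

theorem norm_stable_image_le_of_split (hp : 0 < p) (hp2 : p ≤ 1 / 2) (hs : ‖Ts‖ ≤ p * ‖s‖)
    (hu : p⁻¹ * ‖u‖ ≤ ‖Tu‖) (ha : ‖s + u‖ ≤ a) (hb : ‖Ts + Tu‖ ≤ b) :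
    ‖Ts‖ ≤ p * (2 * a + b) := by
  have hab : 0 ≤ a + b := add_nonneg ((norm_nonneg _).trans ha) ((norm_nonneg _).trans hb)
  have hs' : ‖s‖ ≤ a + ‖u‖ := by
    simpa using (norm_sub_le (s + u) u).trans (add_le_add_left ha _)
  have hu' := norm_unstable_le_of_split hp hp2 hs hu ha hb
  calc ‖Ts‖ ≤ p * (a + 2 * p * (a + b)) := hs.trans (by gcongr; linarith)
    _ ≤ p * (2 * a + b) := mul_le_mul_of_nonneg_left (by nlinarith) hp.le

end Splitting

theorem SG.exists_impulse_response {m : ℕ} {A : ℤ → Euc m ≃L[ℝ] Euc m} {γ : ℝ}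
    (h : SG m A γ) :
    ∃ L : ℝ, ∀ N : ℕ, 0 < N → ∀ z : Euc m, ‖z‖ ≤ 1 → ∃ x : Euc m,
      ‖x‖ ≤ L * (2 * N : ℝ) ^ γ ∧ ‖Phi m A (-N) N x + z‖ ≤ L * (2 * N : ℝ) ^ γ ∧
      ‖Phi m A 0 N (Phi m A (-N) N x + z)‖ ≤ L * (2 * N : ℝ) ^ γ := by
  obtain ⟨L, -, hL⟩ := h
  refine ⟨L, fun N hN z hz => ?_⟩
  obtain ⟨v, hrec, hbnd⟩ := hL (-N) (2 * N) (by omega) (fun k => if k = 0 then z else 0)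
    fun k _ _ => by split_ifs <;> simp [hz]
  simp only [Nat.cast_mul, Nat.cast_ofNat] at hrec hbnd
  have hfree : ∀ k, -(N : ℤ) ≤ k → k < N → k ≠ -1 → v (k + 1) = A k (v k) :=
    fun k hk hkN hk1 => by
      simpa [show k + 1 ≠ 0 by omega] using hrec k hk (by omega)
  have hkick : v 0 = A (-1) (v (-1)) + z := by simpa using hrec (-1) (by omega) (by omega)
  have hfwd : v N = Phi m A 0 N (v 0) := by
    simpa using eq_Phi_of_forall_succ A (a := 0) (n := N)
      fun k hk hkN => hfree k (by omega) (by omega) (by omega)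
  have hv0 : v 0 = Phi m A (-N) N (v (-N)) + z := by
    obtain ⟨n, rfl⟩ : ∃ n, N = n + 1 := ⟨N - 1, by omega⟩
    have hback := eq_Phi_of_forall_succ A (a := -((n + 1 : ℕ) : ℤ)) (n := n)
      fun k hk hkn => hfree k hk (by omega) (by omega)
    have hlast : -((n + 1 : ℕ) : ℤ) + n = -1 := by push_cast; ring
    rw [hlast] at hback
    rw [hkick, hback]
    show _ = A (_ + n) _ + z
    rw [hlast]
  refine ⟨v (-N), hbnd _ le_rfl (by omega), ?_, ?_⟩
  · rw [← hv0]
    exact hbnd 0 (by omega) (by omega)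
  · rw [← hv0, ← hfwd]
    exact hbnd N (by omega) (by omega)

section Dichotomy

variable {m : ℕ} {A : ℤ → Euc m ≃L[ℝ] Euc m} {Es Eu : ℤ → Submodule ℝ (Euc m)}

theorem ExpDichPos.exists_inner_le (h : ExpDichPos m A Es Eu) :
    ∃ C > 0, ∃ lam ∈ Set.Ioo (0 : ℝ) 1, ∀ N : ℕ, 0 < N → C * lam ^ N ≤ 1 / 2 →
      ∀ z ∈ (Es 0)ᗮ, ‖z‖ ≤ 1 → ∀ (y : Euc m) (M : ℝ), ‖y‖ ≤ M → ‖Phi m A 0 N y‖ ≤ M →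
        ⟪z, y⟫ ≤ 4 * (C * lam ^ N) * M := by
  obtain ⟨C, hC, lam, hlam, hcompl, -, -, hs, hu⟩ := h
  refine ⟨C, hC, lam, hlam, fun N hN hp z hz hz1 y M hy hΦy => ?_⟩
  obtain ⟨s, hsE, u, huE, rfl⟩ := Submodule.mem_sup.mp
    ((hcompl 0 le_rfl).sup_eq_top ▸ Submodule.mem_top : y ∈ Es 0 ⊔ Eu 0)
  have hu' : (C * lam ^ N)⁻¹ * ‖u‖ ≤ ‖Phi m A 0 N u‖ := by
    rw [mul_inv]; simpa using hu 0 le_rfl N hN u huE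
  rw [Phi_add] at hΦy
  calc ⟪z, s + u⟫ = ⟪z, u⟫ := by
        rw [inner_add_right, Submodule.inner_left_of_mem_orthogonal hsE hz, zero_add]
    _ ≤ ‖z‖ * ‖u‖ := real_inner_le_norm _ _
    _ ≤ ‖u‖ := mul_le_of_le_one_left (norm_nonneg _) hz1
    _ ≤ 2 * (C * lam ^ N) * (M + M) :=
      norm_unstable_le_of_split (by have := hlam.1; positivity) hp
        (hs 0 le_rfl N hN s hsE) hu' hy hΦy
    _ = 4 * (C * lam ^ N) * M := by ring

theorem ExpDichNeg.exists_le_inner (h : ExpDichNeg m A Es Eu) :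
    ∃ C > 0, ∃ lam ∈ Set.Ioo (0 : ℝ) 1, ∀ N : ℕ, 0 < N → C * lam ^ N ≤ 1 / 2 →
      ∀ z ∈ (Eu 0)ᗮ, ‖z‖ = 1 → ∀ (x : Euc m) (M : ℝ), ‖x‖ ≤ M →
        ‖Phi m A (-N) N x + z‖ ≤ M →
          1 - C * lam ^ N * (3 * M + 1) ≤ ⟪z, Phi m A (-N) N x + z⟫ := by
  obtain ⟨C, hC, lam, hlam, hcompl, -, hmap, hs, hu⟩ := h
  refine ⟨C, hC, lam, hlam, fun N hN hp z hz hz1 x M hx hy => ?_⟩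
  obtain ⟨s, hsE, u, huE, rfl⟩ := Submodule.mem_sup.mp
    ((hcompl (-N) (by omega)).sup_eq_top ▸ Submodule.mem_top : x ∈ Es (-N) ⊔ Eu (-N))
  have hu' : (C * lam ^ N)⁻¹ * ‖u‖ ≤ ‖Phi m A (-N) N u‖ := by
    rw [mul_inv]; simpa using hu (-N) N hN (by omega) u huE
  have hΦu : Phi m A (-N) N u ∈ Eu 0 := by
    simpa using Phi_mem_of_map_le A (n := N) (fun k _ hk => (hmap k (by omega)).le) huE
  have hΦx : ‖Phi m A (-N) N s + Phi m A (-N) N u‖ ≤ M + 1 := by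
    rw [← Phi_add, ← hz1, ← add_sub_cancel_right (Phi m A (-N) N (s + u)) z]
    exact (norm_sub_le _ _).trans (add_le_add_left hy _)
  have hΦs := norm_stable_image_le_of_split (by have := hlam.1; positivity) hp
    (hs (-N) N hN (by omega) s hsE) hu' hx hΦx
  have hinner : ⟪z, Phi m A (-N) N (s + u) + z⟫ = ⟪z, Phi m A (-N) N s⟫ + 1 := by
    rw [Phi_add, inner_add_right, inner_add_right,
      Submodule.inner_left_of_mem_orthogonal hΦu hz, real_inner_self_eq_norm_sq, hz1]
    ring
  have hneg : -‖Phi m A (-N) N s‖ ≤ ⟪z, Phi m A (-N) N s⟫ := by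
    simpa [hz1] using neg_le_of_abs_le (abs_real_inner_le_norm z (Phi m A (-N) N s))
  rw [hinner]
  linarith

end Dichotomy

theorem slow_growth_and_dichotomy_implies_transversality_general
    (m : ℕ)
    (A : ℤ → Euc m ≃L[ℝ] Euc m)
    (γ : ℝ) (hSG : SG m A γ)
    (Esp Eup Esm Eum : ℤ → Submodule ℝ (Euc m))
    (hpos : ExpDichPos m A Esp Eup) (hneg : ExpDichNeg m A Esm Eum) :
    Esp 0 ⊔ Eum 0 = ⊤ := by
  by_contra hne
  obtain ⟨z, hz, hz1⟩ := Submodule.exists_norm_eq_one_mem_orthogonal hne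
  rw [← Submodule.inf_orthogonal] at hz
  obtain ⟨Cp, hCp, lp, hlp, hpos⟩ := hpos.exists_inner_le
  obtain ⟨Cm, hCm, lm, hlm, hneg⟩ := hneg.exists_le_inner
  obtain ⟨L, hSG⟩ := hSG.exists_impulse_response
  obtain ⟨N, hN, hp, hq⟩ := ((eventually_gt_atTop 0).and
    (((tendsto_geom_mul_rpow_two_mul_add_one Cp L γ hlp.1 hlp.2).eventually_lt_const
      (by norm_num : (0 : ℝ) < 1 / 8)).and
    ((tendsto_geom_mul_rpow_two_mul_add_one Cm L γ hlm.1 hlm.2).eventually_lt_const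
      (by norm_num : (0 : ℝ) < 1 / 8)))).exists
  obtain ⟨x, hx, hy, hΦy⟩ := hSG N hN z hz1.le
  set M := L * (2 * N : ℝ) ^ γ
  have hM : 0 ≤ M := (norm_nonneg _).trans hx
  have hp0 : 0 ≤ Cp * lp ^ N := by have := hlp.1; positivity
  have hq0 : 0 ≤ Cm * lm ^ N := by have := hlm.1; positivity
  have hupper := hpos N hN (by nlinarith) z hz.1 hz1.le _ M hy hΦy
  have hlower := hneg N hN (by nlinarith) z hz.2 hz1 x M hx hy
  nlinarith

/-- Lemma 6.1 ("lemSTC"): slow (sublinear) growth together with exponential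
dichotomies on both half-axes (A1) implies the transversality condition (A2). -/
theorem slow_growth_and_dichotomy_implies_transversality
    (m : ℕ) (hm : 1 ≤ m) (R : ℝ) (hR : 1 < R)
    (A : ℤ → Euc m ≃L[ℝ] Euc m)
    (hAbound : ∀ n : ℤ, ‖(A n : Euc m →L[ℝ] Euc m)‖ < R ∧
      ‖((A n).symm : Euc m →L[ℝ] Euc m)‖ < R)
    (γ : ℝ) (hγ : γ ∈ Set.Ioo (0 : ℝ) 1) (hSG : SG m A γ)
    (Esp Eup Esm Eum : ℤ → Submodule ℝ (Euc m))
    (hpos : ExpDichPos m A Esp Eup) (hneg : ExpDichNeg m A Esm Eum) :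
    Esp 0 ⊔ Eum 0 = ⊤ :=
  slow_growth_and_dichotomy_implies_transversality_general m A γ hSG Esp Eup Esm Eum hpos hneg
end
end

section
/- Let R > 1 and let 𝒜 = (A_n)_{n∈ℤ} be a sequence of linear isomorphisms of ℝ (i.e. multiplication by nonzero reals a_n with 1/R < |a_n| < R). If 𝒜 has property SG(γ) for some γ ∈ [0,1), then 𝒜 has exponential dichotomy on ℤ⁺, witnessed by subspaces (E_k^{s,+}, E_k^{u,+})_{k≥0}, exponential dichotomy on ℤ⁻, witnessed by subspaces (E_k^{s,−}, E_k^{u,−})_{k≤0}, and these witnesses can be chosen so that E_0^{s,+} + E_0^{u,−} = ℝ. -/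
noncomputable section

/-- The cocycle for the one-dimensional system `v ↦ a_n * v`:
`Phi1 a k l = a_{k+l-1} ⋯ a_k`. -/
def Phi1 (a : ℤ → ℝ) (k : ℤ) (l : ℕ) : ℝ := ∏ j ∈ Finset.range l, a (k + j)

/-- Slow growth property with exponent γ for the one-dimensional system. -/
def SG1 (a : ℤ → ℝ) (γ : ℝ) : Prop :=
  ∃ L : ℝ, 0 < L ∧ ∀ (i : ℤ) (N : ℕ), 1 ≤ N →
    ∀ w : ℤ → ℝ, (∀ k : ℤ, i + 1 ≤ k → k ≤ i + N → |w k| ≤ 1) →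
    ∃ v : ℤ → ℝ,
      (∀ k : ℤ, i ≤ k → k ≤ i + N - 1 → v (k + 1) = a k * v k + w (k + 1)) ∧
      (∀ k : ℤ, i ≤ k → k ≤ i + N → |v k| ≤ L * (N : ℝ) ^ γ)

/-- Exponential dichotomy on ℤ⁺ for the one-dimensional system. -/
def ExpDichPos1 (a : ℤ → ℝ) (Es Eu : ℤ → Submodule ℝ ℝ) : Prop :=
  ∃ C : ℝ, 0 < C ∧ ∃ lam : ℝ, lam ∈ Set.Ioo (0 : ℝ) 1 ∧
    (∀ k : ℤ, 0 ≤ k → IsCompl (Es k) (Eu k)) ∧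
    (∀ k : ℤ, 0 ≤ k → (Es k).map (a k • (LinearMap.id : ℝ →ₗ[ℝ] ℝ)) = Es (k + 1)) ∧
    (∀ k : ℤ, 0 ≤ k → (Eu k).map (a k • (LinearMap.id : ℝ →ₗ[ℝ] ℝ)) = Eu (k + 1)) ∧
    (∀ k : ℤ, 0 ≤ k → ∀ l : ℕ, 0 < l → ∀ v ∈ Es k,
      |Phi1 a k l * v| ≤ C * lam ^ l * |v|) ∧
    (∀ k : ℤ, 0 ≤ k → ∀ l : ℕ, 0 < l → ∀ v ∈ Eu k,
      C⁻¹ * lam ^ (-(l : ℤ)) * |v| ≤ |Phi1 a k l * v|)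

/-- Exponential dichotomy on ℤ⁻ for the one-dimensional system. -/
def ExpDichNeg1 (a : ℤ → ℝ) (Es Eu : ℤ → Submodule ℝ ℝ) : Prop :=
  ∃ C : ℝ, 0 < C ∧ ∃ lam : ℝ, lam ∈ Set.Ioo (0 : ℝ) 1 ∧
    (∀ k : ℤ, k ≤ 0 → IsCompl (Es k) (Eu k)) ∧
    (∀ k : ℤ, k < 0 → (Es k).map (a k • (LinearMap.id : ℝ →ₗ[ℝ] ℝ)) = Es (k + 1)) ∧
    (∀ k : ℤ, k < 0 → (Eu k).map (a k • (LinearMap.id : ℝ →ₗ[ℝ] ℝ)) = Eu (k + 1)) ∧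
    (∀ (k : ℤ) (l : ℕ), 0 < l → k + l ≤ 0 → ∀ v ∈ Es k,
      |Phi1 a k l * v| ≤ C * lam ^ l * |v|) ∧
    (∀ (k : ℤ) (l : ℕ), 0 < l → k + l ≤ 0 → ∀ v ∈ Eu k,
      C⁻¹ * lam ^ (-(l : ℤ)) * |v| ≤ |Phi1 a k l * v|)

namespace SGaux

lemma phi_succ (a : ℤ → ℝ) (k : ℤ) (l : ℕ) :
    Phi1 a k (l+1) = Phi1 a k l * a (k + l) := Finset.prod_range_succ _ _

lemma phi_succ' (a : ℤ → ℝ) (k : ℤ) (l : ℕ) :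
    Phi1 a k (l+1) = a k * Phi1 a (k+1) l := by
  unfold Phi1
  rw [Finset.prod_range_succ', mul_comm]
  congr 1
  · simp
  · refine Finset.prod_congr rfl fun j _ => ?_
    congr 1
    push_cast
    ring

lemma phi_ne (a : ℤ → ℝ) (ha : ∀ n, a n ≠ 0) (k : ℤ) (l : ℕ) : Phi1 a k l ≠ 0 :=
  Finset.prod_ne_zero_iff.mpr fun _ _ => ha _

lemma phi_abs_pos (a : ℤ → ℝ) (ha : ∀ n, a n ≠ 0) (k : ℤ) (l : ℕ) : 0 < |Phi1 a k l| :=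
  abs_pos.mpr (phi_ne a ha k l)

def hfun (a : ℤ → ℝ) : ℤ → ℝ := fun k =>
  if 0 ≤ k then |Phi1 a 0 k.toNat|⁻¹ else |Phi1 a k (-k).toNat|

lemma hfun_pos (a : ℤ → ℝ) (ha : ∀ n, a n ≠ 0) (k : ℤ) : 0 < hfun a k := by
  unfold hfun
  split_ifs
  · exact inv_pos.mpr (phi_abs_pos a ha _ _)
  · exact phi_abs_pos a ha _ _

lemma hfun_step (a : ℤ → ℝ) (ha : ∀ n, a n ≠ 0) (x : ℤ) :
    |a x| * hfun a (x+1) = hfun a x := by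
  have hax : |a x| ≠ 0 := fun h => ha x (abs_eq_zero.mp h)
  by_cases h0 : 0 ≤ x
  · have h1 : 0 ≤ x + 1 := by omega
    have h2 : (x+1).toNat = x.toNat + 1 := by omega
    unfold hfun
    rw [if_pos h0, if_pos h1, h2, phi_succ]
    have h3 : (0:ℤ) + (x.toNat : ℤ) = x := by omega
    rw [h3, abs_mul, mul_inv]
    rw [← mul_assoc, mul_comm (|a x|) (|Phi1 a 0 x.toNat|⁻¹), mul_assoc,
      mul_inv_cancel₀ hax, mul_one]
  · by_cases h1 : x = -1
    · subst h1
      unfold hfun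
      norm_num
      have h6 : Phi1 a (-1) 1 = a (-1) := by
        simp [Phi1, Finset.prod_range_one]
      rw [h6]
      have h7 : Phi1 a 0 0 = 1 := by simp [Phi1]
      rw [h7]
      simp
    · have h2 : x + 1 < 0 := by omega
      have h3 : ¬ (0 ≤ x) := h0
      have h4 : ¬ (0 ≤ x + 1) := by omega
      unfold hfun
      rw [if_neg h3, if_neg h4]
      have h5 : (-x).toNat = (-(x+1)).toNat + 1 := by omega
      rw [h5, phi_succ', abs_mul]

lemma hfun_phi (a : ℤ → ℝ) (ha : ∀ n, a n ≠ 0) (k : ℤ) (l : ℕ) :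
    |Phi1 a k l| * hfun a (k + l) = hfun a k := by
  induction l with
  | zero => simp [Phi1]
  | succ n ih =>
    rw [phi_succ, abs_mul]
    have h1 : k + ((n+1 : ℕ) : ℤ) = (k + n) + 1 := by push_cast; ring
    rw [h1, mul_assoc, hfun_step a ha (k + n), ih]

lemma sign_mul_self {x : ℝ} (hx : x ≠ 0) : x * Real.sign x = |x| := by
  rcases lt_trichotomy x 0 with h | h | h
  · rw [Real.sign_of_neg h, abs_of_neg h]; ring
  · exact absurd h hx
  · rw [Real.sign_of_pos h, abs_of_pos h]; ring

lemma abs_sign_le (x : ℝ) : |Real.sign x| ≤ 1 := by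
  unfold Real.sign
  split_ifs <;> norm_num

lemma sum_range_to_Icc (f : ℤ → ℝ) (i : ℤ) : ∀ N : ℕ,
    ∑ j ∈ Finset.range N, f (i + 1 + j) = ∑ k ∈ Finset.Icc (i+1) (i+N), f k := by
  intro N
  induction N with
  | zero =>
    have : Finset.Icc (i+1) (i+(0:ℕ)) = ∅ := by
      apply Finset.Icc_eq_empty
      omega
    simp [this]
  | succ n ih =>
    have hins : Finset.Icc (i+1) (i+((n+1:ℕ):ℤ)) =
        insert (i+(n:ℤ)+1) (Finset.Icc (i+1) (i+(n:ℤ))) := by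
      ext x
      simp only [Finset.mem_Icc, Finset.mem_insert]
      omega
    rw [Finset.sum_range_succ, hins, Finset.sum_insert (by simp), ih]
    have : i + 1 + (n:ℤ) = i + (n:ℤ) + 1 := by ring
    rw [this]
    ring


lemma MI_lemma (a : ℤ → ℝ) (ha : ∀ n, a n ≠ 0) (γ L : ℝ) (hL : 0 < L)
    (hsg : ∀ (i : ℤ) (N : ℕ), 1 ≤ N → ∀ w : ℤ → ℝ,
      (∀ k : ℤ, i + 1 ≤ k → k ≤ i + N → |w k| ≤ 1) →
      ∃ v : ℤ → ℝ,
        (∀ k : ℤ, i ≤ k → k ≤ i + N - 1 → v (k + 1) = a k * v k + w (k + 1)) ∧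
        (∀ k : ℤ, i ≤ k → k ≤ i + N → |v k| ≤ L * (N : ℝ) ^ γ))
    (i : ℤ) (N : ℕ) (hN : 1 ≤ N) :
    ∑ j ∈ Finset.range N, hfun a (i + 1 + j) ≤
      L * (N : ℝ) ^ γ * (hfun a i + hfun a (i + N)) := by
  set w : ℤ → ℝ := fun k => Real.sign (Phi1 a k ((i + N - k).toNat)) with hw
  obtain ⟨v, hv, hb⟩ := hsg i N hN w (fun k _ _ => abs_sign_le _)
  have key : ∀ n : ℕ, n ≤ N → v (i + n) = Phi1 a i n * v i +
      ∑ j ∈ Finset.range n, Phi1 a (i+1+j) (n-1-j) * w (i+1+j) := by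
    intro n
    induction n with
    | zero => intro _; simp [Phi1]
    | succ n ih =>
      intro hn
      have e0 : i + ((n+1:ℕ):ℤ) = (i + (n:ℕ)) + 1 := by push_cast; ring
      have e1 : v (i + ((n+1:ℕ):ℤ)) = a (i+(n:ℕ)) * v (i+(n:ℕ)) + w (i+(n:ℕ)+1) := by
        rw [e0]
        exact hv (i + (n:ℕ)) (by omega) (by omega)
      rw [e1, ih (by omega)]
      have hterm : ∀ j ∈ Finset.range n,
          Phi1 a (i+1+(j:ℕ)) (n+1-1-j) * w (i+1+(j:ℕ))
          = a (i+(n:ℕ)) * (Phi1 a (i+1+(j:ℕ)) (n-1-j) * w (i+1+(j:ℕ))) := by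
        intro j hj
        simp only [Finset.mem_range] at hj
        have h1 : n + 1 - 1 - j = (n-1-j) + 1 := by omega
        rw [h1, phi_succ]
        have h2 : (i+1+(j:ℤ)) + ((n-1-j : ℕ):ℤ) = i + (n:ℕ) := by
          have : ((n-1-j:ℕ):ℤ) = (n:ℤ) - 1 - j := by omega
          rw [this]; push_cast; ring
        rw [h2]; ring
      rw [Finset.sum_range_succ, Finset.sum_congr rfl hterm, ← Finset.mul_sum]
      have h3 : n + 1 - 1 - n = 0 := by omega
      rw [h3]
      have h4 : Phi1 a (i+1+(n:ℕ)) 0 = 1 := by simp [Phi1]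
      rw [h4, phi_succ]
      have h5 : i + (n:ℤ) + 1 = i + 1 + (n:ℤ) := by ring
      rw [h5]
      ring
  have hkey := key N le_rfl
  have habs : ∀ j ∈ Finset.range N,
      Phi1 a (i+1+(j:ℕ)) (N-1-j) * w (i+1+(j:ℕ)) = |Phi1 a (i+1+(j:ℕ)) (N-1-j)| := by
    intro j hj
    simp only [Finset.mem_range] at hj
    have h1 : (i + (N:ℕ) - (i+1+(j:ℕ))).toNat = N-1-j := by omega
    rw [hw]
    simp only []
    rw [h1]
    exact sign_mul_self (phi_ne a ha _ _)
  rw [Finset.sum_congr rfl habs] at hkey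
  set S := ∑ j ∈ Finset.range N, |Phi1 a (i+1+(j:ℕ)) (N-1-j)| with hS
  have hSr : S = v (i+N) - Phi1 a i N * v i := by rw [hkey]; ring
  have h1 : |v (i+(N:ℕ))| ≤ L * (N:ℝ)^γ := hb (i+N) (by omega) (by omega)
  have h2 : |v i| ≤ L * (N:ℝ)^γ := hb i le_rfl (by omega)
  have hSb : S ≤ L * (N:ℝ)^γ * (1 + |Phi1 a i N|) := by
    have := abs_sub (v (i+(N:ℕ))) (Phi1 a i N * v i)
    have h3 : S ≤ |v (i+(N:ℕ))| + |Phi1 a i N| * |v i| := by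
      rw [hSr]
      calc v (i+(N:ℕ)) - Phi1 a i N * v i ≤ |v (i+(N:ℕ)) - Phi1 a i N * v i| := le_abs_self _
      _ ≤ |v (i+(N:ℕ))| + |Phi1 a i N * v i| := abs_sub _ _
      _ = |v (i+(N:ℕ))| + |Phi1 a i N| * |v i| := by rw [abs_mul]
    have h4 : |Phi1 a i N| * |v i| ≤ |Phi1 a i N| * (L * (N:ℝ)^γ) :=
      mul_le_mul_of_nonneg_left h2 (abs_nonneg _)
    nlinarith
  have hsum : ∑ j ∈ Finset.range N, hfun a (i+1+(j:ℕ)) = S * hfun a (i+N) := by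
    rw [hS, Finset.sum_mul]
    refine Finset.sum_congr rfl fun j hj => ?_
    simp only [Finset.mem_range] at hj
    have h5 : (i+1+(j:ℤ)) + ((N-1-j:ℕ):ℤ) = i + N := by omega
    have := hfun_phi a ha (i+1+(j:ℕ)) (N-1-j)
    rw [h5] at this
    exact this.symm
  have hΦ : |Phi1 a i N| * hfun a (i+N) = hfun a i := hfun_phi a ha i N
  have hH : 0 < hfun a (i+(N:ℕ)) := hfun_pos a ha _
  rw [hsum]
  calc S * hfun a (i+(N:ℕ)) ≤ (L * (N:ℝ)^γ * (1 + |Phi1 a i N|)) * hfun a (i+(N:ℕ)) :=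
        mul_le_mul_of_nonneg_right hSb hH.le
  _ = L * (N:ℝ)^γ * (hfun a (i+(N:ℕ)) + |Phi1 a i N| * hfun a (i+(N:ℕ))) := by ring
  _ = L * (N:ℝ)^γ * (hfun a i + hfun a (i+(N:ℕ))) := by rw [hΦ]; ring


lemma hfun_ratio (a : ℤ → ℝ) (ha : ∀ n, a n ≠ 0) (R : ℝ) (hR : 1 < R)
    (haB : ∀ n : ℤ, 1 / R < |a n| ∧ |a n| < R) (x : ℤ) :
    hfun a x ≤ R * hfun a (x+1) ∧ hfun a (x+1) ≤ R * hfun a x := by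
  have hR0 : 0 < R := by linarith
  have hs := hfun_step a ha x
  have hp1 : 0 < hfun a (x+1) := hfun_pos a ha _
  have hax1 := (haB x).1
  have hax2 := (haB x).2
  constructor
  · rw [← hs]
    exact mul_le_mul_of_nonneg_right hax2.le hp1.le
  · rw [← hs]
    have : 1 / R * hfun a (x+1) ≤ |a x| * hfun a (x+1) :=
      mul_le_mul_of_nonneg_right hax1.le hp1.le
    calc hfun a (x+1) = R * (1/R * hfun a (x+1)) := by field_simp
    _ ≤ R * (|a x| * hfun a (x+1)) := mul_le_mul_of_nonneg_left this hR0.le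
  
lemma hfun_dist (a : ℤ → ℝ) (ha : ∀ n, a n ≠ 0) (R : ℝ) (hR : 1 < R)
    (haB : ∀ n : ℤ, 1 / R < |a n| ∧ |a n| < R) (x : ℤ) : ∀ d : ℕ,
    hfun a (x + d) ≤ R^d * hfun a x ∧ hfun a x ≤ R^d * hfun a (x + d) := by
  have hR0 : 0 < R := by linarith
  intro d
  induction d with
  | zero => simp
  | succ n ih =>
    have e0 : x + ((n+1:ℕ):ℤ) = (x + (n:ℕ)) + 1 := by push_cast; ring
    have hr := hfun_ratio a ha R hR haB (x + (n:ℕ))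
    constructor
    · rw [e0, pow_succ]
      calc hfun a ((x+(n:ℕ))+1) ≤ R * hfun a (x+(n:ℕ)) := hr.2
      _ ≤ R * (R^n * hfun a x) := mul_le_mul_of_nonneg_left ih.1 hR0.le
      _ = R^n * R * hfun a x := by ring
    · rw [e0, pow_succ]
      calc hfun a x ≤ R^n * hfun a (x+(n:ℕ)) := ih.2
      _ ≤ R^n * (R * hfun a ((x+(n:ℕ))+1)) :=
          mul_le_mul_of_nonneg_left hr.1 (by positivity)
      _ = R^n * R * hfun a ((x+(n:ℕ))+1) := by ring

lemma grow_aux (m : ℤ → ℝ) (t₀ : ℤ)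
    (hup : ∀ t : ℤ, t₀ ≤ t → 4 * m t ≤ m (t+1)) :
    ∀ (n : ℕ) (u : ℤ), t₀ ≤ u → 0 ≤ m u → (4:ℝ)^n * m u ≤ m (u + n) := by
  intro n
  induction n with
  | zero => intro u _ _; simp
  | succ n ih =>
    intro u hu hmu
    have e0 : u + ((n+1:ℕ):ℤ) = (u + (n:ℕ)) + 1 := by push_cast; ring
    have h1 : (4:ℝ)^n * m u ≤ m (u + (n:ℕ)) := ih u hu hmu
    have h2 := hup (u + (n:ℕ)) (by omega)
    rw [e0, pow_succ]
    nlinarith [pow_nonneg (by norm_num : (0:ℝ) ≤ 4) n]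

lemma fall_aux (m : ℤ → ℝ) (s : ℤ)
    (hdn : ∀ t : ℤ, t ≤ s → 4 * m t ≤ m (t-1)) :
    ∀ (n : ℕ) (v : ℤ), v ≤ s → 0 ≤ m v → (4:ℝ)^n * m v ≤ m (v - n) := by
  intro n
  induction n with
  | zero => intro v _ _; simp
  | succ n ih =>
    intro v hv hmv
    have e0 : v - ((n+1:ℕ):ℤ) = (v - (n:ℕ)) - 1 := by push_cast; ring
    have h1 : (4:ℝ)^n * m v ≤ m (v - (n:ℕ)) := ih v hv hmv
    have h2 := hdn (v - (n:ℕ)) (by omega)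
    rw [e0, pow_succ]
    nlinarith [pow_nonneg (by norm_num : (0:ℝ) ≤ 4) n]

lemma cb_rise (m : ℤ → ℝ) (hmpos : ∀ t, 0 < m t) (t₀ : ℤ)
    (hup : ∀ t : ℤ, t₀ ≤ t → 4 * m t ≤ m (t+1)) :
    ∃ C1 : ℝ, 0 < C1 ∧ ∀ u v : ℤ, 0 ≤ u → u ≤ v →
      m u * 4^((v-u).toNat) ≤ C1 * m v := by
  set P := max t₀ 0 with hP
  have hP0 : (0:ℤ) ≤ P := le_max_right _ _
  have hPt : t₀ ≤ P := le_max_left _ _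
  have hne : (Finset.Icc (0:ℤ) P).Nonempty := ⟨0, by simp [hP0]⟩
  set B := (Finset.Icc (0:ℤ) P).sup' hne m with hB
  set b := (Finset.Icc (0:ℤ) P).inf' hne m with hb
  have hbpos : 0 < b := by
    obtain ⟨x, hx, he⟩ := Finset.exists_mem_eq_inf' hne m
    rw [hb, he]; exact hmpos x
  have hBpos : 0 < B := by
    refine lt_of_lt_of_le (hmpos 0) ?_
    exact Finset.le_sup' m (by simp [hP0])
  refine ⟨(B * 4^(P.toNat) + b) / b, by positivity, ?_⟩
  intro u v hu huv
  rw [div_mul_eq_mul_div, le_div_iff₀ hbpos]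
  -- goal : m u * 4 ^ (v - u).toNat * b ≤ (B * 4 ^ P.toNat + b) * m v
  by_cases hcase : P ≤ u
  · have h1 : (4:ℝ)^((v-u).toNat) * m u ≤ m v := by
      have := grow_aux m t₀ hup ((v-u).toNat) u (le_trans hPt hcase) (hmpos u).le
      rwa [show u + (((v-u).toNat:ℕ):ℤ) = v by omega] at this
    have h2 : m u * 4^((v-u).toNat) * b ≤ m v * b := by
      nlinarith [hbpos]
    nlinarith [mul_pos (mul_pos hBpos (pow_pos (by norm_num : (0:ℝ) < 4) (P.toNat))) (hmpos v)]
  · push_neg at hcase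
    have hmem_u : u ∈ Finset.Icc (0:ℤ) P := by simp [Finset.mem_Icc]; omega
    have hmuB : m u ≤ B := Finset.le_sup' m hmem_u
    by_cases hv : P ≤ v
    · -- u < P ≤ v
      have h2 : (4:ℝ)^((v-P).toNat) * m P ≤ m v := by
        have := grow_aux m t₀ hup ((v-P).toNat) P hPt (hmpos P).le
        rwa [show P + (((v-P).toNat:ℕ):ℤ) = v by omega] at this
      have hbP : b ≤ m P := Finset.inf'_le m (by simp [Finset.mem_Icc]; omega)
      have hsplit : (v-u).toNat = (v-P).toNat + (P-u).toNat := by omega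
      have hexp : (4:ℝ)^((P-u).toNat) ≤ 4^(P.toNat) :=
        pow_le_pow_right₀ (by norm_num) (by omega)
      rw [hsplit, pow_add]
      -- m u * (4^{v-P} * 4^{P-u}) * b ≤ (B*4^P + b) * m v
      have hA : m u * 4^((P-u).toNat) ≤ B * 4^(P.toNat) := by
        have := mul_le_mul hmuB hexp (by positivity) hBpos.le
        linarith
      have hBnn : b * (4:ℝ)^((v-P).toNat) ≤ m v := by
        nlinarith [pow_pos (by norm_num : (0:ℝ) < 4) ((v-P).toNat)]
      have := mul_le_mul hA hBnn (by positivity) (by positivity)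
      nlinarith [hmpos v, hbpos]
    · push_neg at hv
      have hmem_v : v ∈ Finset.Icc (0:ℤ) P := by simp [Finset.mem_Icc]; omega
      have hbv : b ≤ m v := Finset.inf'_le m hmem_v
      have hexp : (4:ℝ)^((v-u).toNat) ≤ 4^(P.toNat) :=
        pow_le_pow_right₀ (by norm_num) (by omega)
      have hA : m u * 4^((v-u).toNat) ≤ B * 4^(P.toNat) := by
        have := mul_le_mul hmuB hexp (by positivity) hBpos.le
        linarith
      have := mul_le_mul hA hbv (hbpos.le) (by positivity)
      nlinarith [hmpos v, hbpos]

lemma cb_fall (m : ℤ → ℝ) (hmpos : ∀ t, 0 < m t) (s : ℤ)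
    (hdn : ∀ t : ℤ, t ≤ s → 4 * m t ≤ m (t-1)) :
    ∃ C2 : ℝ, 0 < C2 ∧ ∀ u v : ℤ, u ≤ v → v ≤ 0 →
      m v * 4^((v-u).toNat) ≤ C2 * m u := by
  set Q := min s 0 with hQ
  have hQ0 : Q ≤ (0:ℤ) := min_le_right _ _
  have hQs : Q ≤ s := min_le_left _ _
  have hne : (Finset.Icc Q (0:ℤ)).Nonempty := ⟨0, by simp [hQ0]⟩
  set B := (Finset.Icc Q (0:ℤ)).sup' hne m with hB
  set b := (Finset.Icc Q (0:ℤ)).inf' hne m with hb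
  have hbpos : 0 < b := by
    obtain ⟨x, hx, he⟩ := Finset.exists_mem_eq_inf' hne m
    rw [hb, he]; exact hmpos x
  have hBpos : 0 < B := by
    refine lt_of_lt_of_le (hmpos 0) ?_
    exact Finset.le_sup' m (by simp [hQ0])
  refine ⟨(B * 4^((-Q).toNat) + b) / b, by positivity, ?_⟩
  intro u v huv hv0
  rw [div_mul_eq_mul_div, le_div_iff₀ hbpos]
  by_cases hcase : v ≤ Q
  · have h1 : (4:ℝ)^((v-u).toNat) * m v ≤ m u := by
      have := fall_aux m s hdn ((v-u).toNat) v (le_trans hcase hQs) (hmpos v).le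
      rwa [show v - (((v-u).toNat:ℕ):ℤ) = u by omega] at this
    have h2 : m v * 4^((v-u).toNat) * b ≤ m u * b := by nlinarith [hbpos]
    nlinarith [mul_pos (mul_pos hBpos (pow_pos (by norm_num : (0:ℝ) < 4) ((-Q).toNat))) (hmpos u)]
  · push_neg at hcase
    have hmem_v : v ∈ Finset.Icc Q (0:ℤ) := by simp [Finset.mem_Icc]; omega
    have hmvB : m v ≤ B := Finset.le_sup' m hmem_v
    by_cases hu : u ≤ Q
    · have h2 : (4:ℝ)^((Q-u).toNat) * m Q ≤ m u := by
        have := fall_aux m s hdn ((Q-u).toNat) Q hQs (hmpos Q).le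
        rwa [show Q - (((Q-u).toNat:ℕ):ℤ) = u by omega] at this
      have hbQ : b ≤ m Q := Finset.inf'_le m (by simp [Finset.mem_Icc]; omega)
      have hsplit : (v-u).toNat = (v-Q).toNat + (Q-u).toNat := by omega
      have hexp : (4:ℝ)^((v-Q).toNat) ≤ 4^((-Q).toNat) :=
        pow_le_pow_right₀ (by norm_num) (by omega)
      rw [hsplit, pow_add]
      have hA : m v * 4^((v-Q).toNat) ≤ B * 4^((-Q).toNat) := by
        have := mul_le_mul hmvB hexp (by positivity) hBpos.le
        linarith
      have hBnn : b * (4:ℝ)^((Q-u).toNat) ≤ m u := by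
        nlinarith [pow_pos (by norm_num : (0:ℝ) < 4) ((Q-u).toNat)]
      have := mul_le_mul hA hBnn (by positivity) (by positivity)
      nlinarith [hmpos u, hbpos]
    · push_neg at hu
      have hmem_u : u ∈ Finset.Icc Q (0:ℤ) := by simp [Finset.mem_Icc]; omega
      have hbu : b ≤ m u := Finset.inf'_le m hmem_u
      have hexp : (4:ℝ)^((v-u).toNat) ≤ 4^((-Q).toNat) :=
        pow_le_pow_right₀ (by norm_num) (by omega)
      have hA : m v * 4^((v-u).toNat) ≤ B * 4^((-Q).toNat) := by
        have := mul_le_mul hmvB hexp (by positivity) hBpos.le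
        linarith
      have := mul_le_mul hA hbu (hbpos.le) (by positivity)
      nlinarith [hmpos u, hbpos]


lemma ediv_facts (W : ℕ) (hW : 0 < W) (k : ℤ) (l : ℕ) :
    k / (W:ℤ) ≤ (k + l) / (W:ℤ) ∧
    (l:ℤ) ≤ W * ((k + l) / (W:ℤ) - k / (W:ℤ)) + W := by
  have hWZ : (0:ℤ) < (W:ℤ) := by exact_mod_cast hW
  have h1 := Int.mul_ediv_add_emod k W
  have h2 := Int.mul_ediv_add_emod (k + l) W
  have h3 : 0 ≤ k % W := Int.emod_nonneg k (by omega)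
  have h4 : k % W < W := Int.emod_lt_of_pos k hWZ
  have h5 : 0 ≤ (k+l) % W := Int.emod_nonneg (k+l) (by omega)
  have h6 : (k+l) % W < W := Int.emod_lt_of_pos (k+l) hWZ
  constructor
  · exact Int.ediv_le_ediv hWZ (by omega)
  · have hx : (W:ℤ) * ((k+l)/(W:ℤ) - k/(W:ℤ))
        = W * ((k+l)/(W:ℤ)) - W * (k/(W:ℤ)) := by ring
    rw [hx]
    omega

lemma block_mem (W : ℕ) (hW : 0 < W) (k : ℤ) :
    (k / (W:ℤ)) * W ≤ k ∧ k ≤ (k / (W:ℤ)) * W + W := by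
  have hWZ : (0:ℤ) < (W:ℤ) := by exact_mod_cast hW
  have h1 := Int.mul_ediv_add_emod k W
  have h3 : 0 ≤ k % W := Int.emod_nonneg k (by omega)
  have h4 : k % W < W := Int.emod_lt_of_pos k hWZ
  have hx : (k / (W:ℤ)) * W = W * (k / (W:ℤ)) := by ring
  omega

lemma lam_pow (W : ℕ) (hW : 0 < W) (l n : ℕ) (hln : (l:ℝ) ≤ W * ((n:ℝ) + 1)) :
    (4:ℝ) ^ (-((n:ℝ)+1)) ≤ ((4:ℝ) ^ (-((W:ℝ))⁻¹)) ^ l ∧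
    ((4:ℝ) ^ (-((W:ℝ))⁻¹)) ^ (-(l:ℤ)) ≤ (4:ℝ) ^ ((n:ℝ)+1) := by
  have hW0 : (0:ℝ) < W := by exact_mod_cast hW
  have h40 : (0:ℝ) < 4 := by norm_num
  have e1 : ((4:ℝ) ^ (-((W:ℝ))⁻¹)) ^ l = (4:ℝ) ^ (-((W:ℝ))⁻¹ * l) := by
    rw [← Real.rpow_natCast ((4:ℝ) ^ (-((W:ℝ))⁻¹)) l, ← Real.rpow_mul (by norm_num)]
  have hexp : -((n:ℝ)+1) ≤ -((W:ℝ))⁻¹ * l := by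
    have : (l:ℝ) / W ≤ (n:ℝ) + 1 := by
      rw [div_le_iff₀ hW0]; linarith
    have h2 : -((W:ℝ))⁻¹ * l = -((l:ℝ)/W) := by field_simp
    rw [h2]; linarith
  constructor
  · rw [e1]
    exact Real.rpow_le_rpow_of_exponent_le (by norm_num) hexp
  · have e2 : ((4:ℝ) ^ (-((W:ℝ))⁻¹)) ^ (-(l:ℤ)) = ((4:ℝ) ^ (-((W:ℝ))⁻¹ * l))⁻¹ := by
      rw [zpow_neg, zpow_natCast, e1]
    rw [e2]
    rw [← Real.rpow_neg (by norm_num)]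
    have : -(-((W:ℝ))⁻¹ * l) ≤ (n:ℝ)+1 := by linarith
    exact Real.rpow_le_rpow_of_exponent_le (by norm_num) this

lemma lam_mem (W : ℕ) (hW : 0 < W) :
    (4:ℝ) ^ (-((W:ℝ))⁻¹) ∈ Set.Ioo (0:ℝ) 1 := by
  have hW0 : (0:ℝ) < W := by exact_mod_cast hW
  constructor
  · exact Real.rpow_pos_of_pos (by norm_num) _
  · apply Real.rpow_lt_one_of_one_lt_of_neg (by norm_num)
    simp [hW0]

lemma fin_stab_point (h m : ℤ → ℝ) (W : ℕ) (hW : 0 < W) (E C1 : ℝ)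
    (hE : 0 < E) (hC1 : 0 < C1) (k : ℤ) (l : ℕ)
    (hh2 : 0 < h (k + l)) (hmu : 0 ≤ m (k / (W:ℤ))) (hmv : 0 ≤ m ((k + l) / (W:ℤ)))
    (hhigh : h k ≤ E * m (k / (W:ℤ)))
    (hlow : m ((k + l) / (W:ℤ)) ≤ h (k + l))
    (hclaim : m (k / (W:ℤ)) * 4 ^ (((k + l) / (W:ℤ) - k / (W:ℤ)).toNat)
      ≤ C1 * m ((k + l) / (W:ℤ))) :
    h k ≤ (4 * E * C1) * ((4:ℝ) ^ (-((W:ℝ))⁻¹)) ^ l * h (k + l) := by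
  obtain ⟨huv, hl⟩ := ediv_facts W hW k l
  set u := k / (W:ℤ) with hu
  set v := (k + l) / (W:ℤ) with hv
  set n := (v - u).toNat with hn
  have hnZ : (n:ℤ) = v - u := Int.toNat_of_nonneg (by omega)
  have hln : (l:ℝ) ≤ W * ((n:ℝ) + 1) := by
    have : (l:ℤ) ≤ W * ((n:ℤ) + 1) := by rw [hnZ]; linarith
    exact_mod_cast this
  have hlam := (lam_pow W hW l n hln).1
  have h4n : (0:ℝ) < 4 ^ (n+1) := by positivity
  have hcore : h k * 4 ^ (n+1) ≤ (4 * E * C1) * h (k + l) := by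
    have A1 : h k * (4:ℝ)^n ≤ E * (m u * 4^n) := by
      have := mul_le_mul_of_nonneg_right hhigh (by positivity : (0:ℝ) ≤ 4^n)
      linarith
    have A2 : E * (m u * 4^n) ≤ E * (C1 * m v) :=
      mul_le_mul_of_nonneg_left hclaim hE.le
    have A3 : E * (C1 * m v) ≤ E * (C1 * h (k+l)) := by
      have := mul_le_mul_of_nonneg_left hlow hC1.le
      exact mul_le_mul_of_nonneg_left this hE.le
    have : h k * (4:ℝ)^n ≤ E * (C1 * h (k+l)) := le_trans A1 (le_trans A2 A3)
    calc h k * 4^(n+1) = (h k * 4^n) * 4 := by rw [pow_succ]; ring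
    _ ≤ (E * (C1 * h (k+l))) * 4 := by linarith
    _ = (4 * E * C1) * h (k+l) := by ring
  have step1 : h k ≤ (4 * E * C1) * ((4:ℝ) ^ (-((n:ℝ)+1))) * h (k + l) := by
    have e3 : ((n:ℝ)+1) = ((n+1:ℕ):ℝ) := by push_cast; ring
    rw [Real.rpow_neg (by norm_num), e3, Real.rpow_natCast]
    rw [mul_comm ((4*E*C1)) _, mul_assoc]
    rw [inv_mul_eq_div, le_div_iff₀ h4n]
    calc h k * 4^(n+1) ≤ (4*E*C1) * h (k+l) := hcore
    _ = 4*E*C1 * h (k+l) := by ring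
  calc h k ≤ (4 * E * C1) * ((4:ℝ) ^ (-((n:ℝ)+1))) * h (k + l) := step1
  _ ≤ (4 * E * C1) * (((4:ℝ) ^ (-((W:ℝ))⁻¹)) ^ l) * h (k + l) := by
      apply mul_le_mul_of_nonneg_right _ hh2.le
      exact mul_le_mul_of_nonneg_left hlam (by positivity)

lemma fin_unst_point (h m : ℤ → ℝ) (W : ℕ) (hW : 0 < W) (E C2 : ℝ)
    (hE : 0 < E) (hC2 : 0 < C2) (k : ℤ) (l : ℕ)
    (hh1 : 0 < h k) (hh2 : 0 ≤ h (k + l))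
    (hmu : 0 ≤ m (k / (W:ℤ))) (hmv : 0 ≤ m ((k + l) / (W:ℤ)))
    (hhigh : h (k + l) ≤ E * m ((k + l) / (W:ℤ)))
    (hlow : m (k / (W:ℤ)) ≤ h k)
    (hclaim : m ((k + l) / (W:ℤ)) * 4 ^ (((k + l) / (W:ℤ) - k / (W:ℤ)).toNat)
      ≤ C2 * m (k / (W:ℤ))) :
    (4 * E * C2)⁻¹ * ((4:ℝ) ^ (-((W:ℝ))⁻¹)) ^ (-(l:ℤ)) * h (k + l) ≤ h k := by
  obtain ⟨huv, hl⟩ := ediv_facts W hW k l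
  set u := k / (W:ℤ) with hu
  set v := (k + l) / (W:ℤ) with hv
  set n := (v - u).toNat with hn
  have hnZ : (n:ℤ) = v - u := Int.toNat_of_nonneg (by omega)
  have hln : (l:ℝ) ≤ W * ((n:ℝ) + 1) := by
    have : (l:ℤ) ≤ W * ((n:ℤ) + 1) := by rw [hnZ]; linarith
    exact_mod_cast this
  have hlam := (lam_pow W hW l n hln).2
  have h4n : (0:ℝ) < 4 ^ (n+1) := by positivity
  have hcore : 4 ^ (n+1) * h (k + l) ≤ (4 * E * C2) * h k := by
    have A1 : (4:ℝ)^n * h (k+l) ≤ E * (m v * 4^n) := by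
      have := mul_le_mul_of_nonneg_right hhigh (by positivity : (0:ℝ) ≤ 4^n)
      linarith
    have A2 : E * (m v * 4^n) ≤ E * (C2 * m u) :=
      mul_le_mul_of_nonneg_left hclaim hE.le
    have A3 : E * (C2 * m u) ≤ E * (C2 * h k) := by
      have := mul_le_mul_of_nonneg_left hlow hC2.le
      exact mul_le_mul_of_nonneg_left this hE.le
    have : (4:ℝ)^n * h (k+l) ≤ E * (C2 * h k) := le_trans A1 (le_trans A2 A3)
    calc (4:ℝ)^(n+1) * h (k+l) = ((4:ℝ)^n * h (k+l)) * 4 := by rw [pow_succ]; ring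
    _ ≤ (E * (C2 * h k)) * 4 := by linarith
    _ = (4 * E * C2) * h k := by ring
  have hC : (0:ℝ) < 4 * E * C2 := by positivity
  have step1 : (4 * E * C2)⁻¹ * ((4:ℝ) ^ ((n:ℝ)+1)) * h (k + l) ≤ h k := by
    have e3 : ((n:ℝ)+1) = ((n+1:ℕ):ℝ) := by push_cast; ring
    rw [e3, Real.rpow_natCast]
    rw [inv_mul_eq_div, div_mul_eq_mul_div, div_le_iff₀ hC]
    nlinarith [hcore]
  refine le_trans ?_ step1
  apply mul_le_mul_of_nonneg_right _ hh2
  exact mul_le_mul_of_nonneg_left hlam (by positivity)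




lemma map_top_smul (c : ℝ) (hc : c ≠ 0) :
    (⊤ : Submodule ℝ ℝ).map (c • (LinearMap.id : ℝ →ₗ[ℝ] ℝ)) = ⊤ := by
  rw [Submodule.map_top, LinearMap.range_eq_top]
  intro y
  refine ⟨c⁻¹ * y, ?_⟩
  simp [smul_eq_mul]
  field_simp

lemma ed_pos_of_stable (a : ℤ → ℝ) (ha : ∀ n, a n ≠ 0) (C lam : ℝ) (hC : 0 < C)
    (hlam : lam ∈ Set.Ioo (0:ℝ) 1)
    (hb : ∀ (k : ℤ) (l : ℕ), 0 ≤ k → 0 < l → |Phi1 a k l| ≤ C * lam ^ l) :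
    ExpDichPos1 a (fun _ => (⊤ : Submodule ℝ ℝ)) (fun _ => ⊥) := by
  refine ⟨C, hC, lam, hlam, fun k _ => isCompl_top_bot, ?_, ?_, ?_, ?_⟩
  · intro k _; exact map_top_smul (a k) (ha k)
  · intro k _; exact Submodule.map_bot _
  · intro k hk l hl v _
    rw [abs_mul]
    exact mul_le_mul_of_nonneg_right (hb k l hk hl) (abs_nonneg v)
  · intro k _ l _ v hv
    have : v = 0 := by simpa using hv
    subst this
    simp

lemma ed_pos_of_unstable (a : ℤ → ℝ) (ha : ∀ n, a n ≠ 0) (C lam : ℝ) (hC : 0 < C)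
    (hlam : lam ∈ Set.Ioo (0:ℝ) 1)
    (hb : ∀ (k : ℤ) (l : ℕ), 0 ≤ k → 0 < l → C⁻¹ * lam ^ (-(l:ℤ)) ≤ |Phi1 a k l|) :
    ExpDichPos1 a (fun _ => (⊥ : Submodule ℝ ℝ)) (fun _ => ⊤) := by
  refine ⟨C, hC, lam, hlam, fun k _ => (isCompl_top_bot).symm, ?_, ?_, ?_, ?_⟩
  · intro k _; exact Submodule.map_bot _
  · intro k _; exact map_top_smul (a k) (ha k)
  · intro k _ l _ v hv
    have : v = 0 := by simpa using hv
    subst this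
    simp
  · intro k hk l hl v _
    rw [abs_mul]
    exact mul_le_mul_of_nonneg_right (hb k l hk hl) (abs_nonneg v)

lemma ed_neg_of_stable (a : ℤ → ℝ) (ha : ∀ n, a n ≠ 0) (C lam : ℝ) (hC : 0 < C)
    (hlam : lam ∈ Set.Ioo (0:ℝ) 1)
    (hb : ∀ (k : ℤ) (l : ℕ), 0 < l → k + l ≤ 0 → |Phi1 a k l| ≤ C * lam ^ l) :
    ExpDichNeg1 a (fun _ => (⊤ : Submodule ℝ ℝ)) (fun _ => ⊥) := by
  refine ⟨C, hC, lam, hlam, fun k _ => isCompl_top_bot, ?_, ?_, ?_, ?_⟩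
  · intro k _; exact map_top_smul (a k) (ha k)
  · intro k _; exact Submodule.map_bot _
  · intro k l hl hkl v _
    rw [abs_mul]
    exact mul_le_mul_of_nonneg_right (hb k l hl hkl) (abs_nonneg v)
  · intro k l _ _ v hv
    have : v = 0 := by simpa using hv
    subst this
    simp

lemma ed_neg_of_unstable (a : ℤ → ℝ) (ha : ∀ n, a n ≠ 0) (C lam : ℝ) (hC : 0 < C)
    (hlam : lam ∈ Set.Ioo (0:ℝ) 1)
    (hb : ∀ (k : ℤ) (l : ℕ), 0 < l → k + l ≤ 0 → C⁻¹ * lam ^ (-(l:ℤ)) ≤ |Phi1 a k l|) :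
    ExpDichNeg1 a (fun _ => (⊥ : Submodule ℝ ℝ)) (fun _ => ⊤) := by
  refine ⟨C, hC, lam, hlam, fun k _ => (isCompl_top_bot).symm, ?_, ?_, ?_, ?_⟩
  · intro k _; exact Submodule.map_bot _
  · intro k _; exact map_top_smul (a k) (ha k)
  · intro k l _ _ v hv
    have : v = 0 := by simpa using hv
    subst this
    simp
  · intro k l hl hkl v _
    rw [abs_mul]
    exact mul_le_mul_of_nonneg_right (hb k l hl hkl) (abs_nonneg v)

end SGaux

/-- Lemma 6.2 ("lemSG7.5"): the one-dimensional case of Theorem 3.5.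
Sublinear growth for a sequence of one-dimensional isomorphisms implies
exponential dichotomy on both half-axes together with transversality at 0. -/
theorem one_dim_sublinear_growth_implies_dichotomy
    (R : ℝ) (hR : 1 < R) (a : ℤ → ℝ) (ha : ∀ n : ℤ, a n ≠ 0)
    (haBound : ∀ n : ℤ, 1 / R < |a n| ∧ |a n| < R)
    (hSG : ∃ γ : ℝ, γ ∈ Set.Ico (0 : ℝ) 1 ∧ SG1 a γ) :
    ∃ Esp Eup Esm Eum : ℤ → Submodule ℝ ℝ,
      ExpDichPos1 a Esp Eup ∧ ExpDichNeg1 a Esm Eum ∧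
      Esp 0 ⊔ Eum 0 = ⊤ := by
  obtain ⟨γ, ⟨hγ0, hγ1⟩, L, hL, hsg⟩ := hSG
  have hR0 : (0:ℝ) < R := by linarith
  -- choice of the block width W
  set X := (24*L+1) ^ ((1-γ)⁻¹) with hX
  set W : ℕ := max 1 ⌈X⌉₊ with hWdef
  have hW1 : 1 ≤ W := le_max_left _ _
  have hW : 0 < W := hW1
  have hWZ : (0:ℤ) < (W:ℤ) := by exact_mod_cast hW
  have hW0 : (0:ℝ) < W := by exact_mod_cast hW
  have h1γ : (0:ℝ) < 1 - γ := by linarith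
  have hX0 : (0:ℝ) ≤ X := Real.rpow_nonneg (by linarith) _
  have hWX : X ≤ W := by
    calc X ≤ (⌈X⌉₊:ℝ) := Nat.le_ceil X
    _ ≤ W := by exact_mod_cast le_max_right 1 ⌈X⌉₊
  have hW1γ : 24*L+1 ≤ (W:ℝ) ^ (1-γ) := by
    have h2 : X ^ (1-γ) ≤ (W:ℝ) ^ (1-γ) := Real.rpow_le_rpow hX0 hWX h1γ.le
    have h3 : X ^ (1-γ) = 24*L+1 := by
      rw [hX, ← Real.rpow_mul (by linarith : (0:ℝ) ≤ 24*L+1)]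
      rw [inv_mul_cancel₀ h1γ.ne', Real.rpow_one]
    linarith
  have hkey : 8*L*(3*(W:ℝ))^γ ≤ W := by
    have hmul : (3*(W:ℝ))^γ = 3^γ * (W:ℝ)^γ :=
      Real.mul_rpow (by norm_num) (by positivity)
    have h3γ : (3:ℝ)^γ ≤ 3 := by
      calc (3:ℝ)^γ ≤ 3^(1:ℝ) :=
        Real.rpow_le_rpow_of_exponent_le (by norm_num) hγ1.le
      _ = 3 := Real.rpow_one 3
    have h3γ0 : (0:ℝ) ≤ (3:ℝ)^γ := by positivity
    have hWγ : (0:ℝ) < (W:ℝ)^γ := Real.rpow_pos_of_pos hW0 _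
    have hWsplit : (W:ℝ) = (W:ℝ)^(1-γ) * (W:ℝ)^γ := by
      rw [← Real.rpow_add hW0]
      have : (1-γ)+γ = 1 := by ring
      rw [this, Real.rpow_one]
    rw [hmul]
    calc 8*L*((3:ℝ)^γ * (W:ℝ)^γ) = ((3:ℝ)^γ)*(8*L*(W:ℝ)^γ) := by ring
    _ ≤ 3*(8*L*(W:ℝ)^γ) := by
        apply mul_le_mul_of_nonneg_right h3γ
        positivity
    _ = 24*L*(W:ℝ)^γ := by ring
    _ ≤ ((W:ℝ)^(1-γ)) * (W:ℝ)^γ := by nlinarith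
    _ = W := hWsplit.symm
  -- the master inequality
  have hMI := SGaux.MI_lemma a ha γ L hL hsg
  have hhpos : ∀ k, 0 < SGaux.hfun a k := SGaux.hfun_pos a ha
  -- block minima
  have hne : ∀ t : ℤ, (Finset.Icc (t*(W:ℤ)) (t*(W:ℤ)+(W:ℤ))).Nonempty :=
    fun t => Finset.nonempty_Icc.mpr (le_add_of_nonneg_right hWZ.le)
  set m : ℤ → ℝ :=
    fun t => (Finset.Icc (t*(W:ℤ)) (t*(W:ℤ)+(W:ℤ))).inf' (hne t) (SGaux.hfun a) with hm
  have hmpos : ∀ t, 0 < m t := by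
    intro t
    obtain ⟨x, hx, he⟩ := Finset.exists_mem_eq_inf' (hne t) (SGaux.hfun a)
    have : m t = SGaux.hfun a x := he
    rw [this]
    exact hhpos x
  have hm_le : ∀ k : ℤ, m (k/(W:ℤ)) ≤ SGaux.hfun a k := by
    intro k
    obtain ⟨hb1, hb2⟩ := SGaux.block_mem W hW k
    exact Finset.inf'_le (SGaux.hfun a) (Finset.mem_Icc.mpr ⟨hb1, hb2⟩)
  have hm_ge : ∀ k : ℤ, SGaux.hfun a k ≤ R^W * m (k/(W:ℤ)) := by
    intro k
    obtain ⟨hb1, hb2⟩ := SGaux.block_mem W hW k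
    obtain ⟨p, hp, he⟩ := Finset.exists_mem_eq_inf' (hne (k/(W:ℤ))) (SGaux.hfun a)
    rw [Finset.mem_Icc] at hp
    have hmp : m (k/(W:ℤ)) = SGaux.hfun a p := he
    rw [hmp]
    rcases le_total p k with hpk | hpk
    · have hkp : k - p ≤ (W:ℤ) := by linarith [hp.1]
      have hd : k = p + (((k-p).toNat:ℕ):ℤ) := by omega
      have hdW : (k-p).toNat ≤ W := by omega
      have hdist := (SGaux.hfun_dist a ha R hR haBound p ((k-p).toNat)).1
      rw [← hd] at hdist
      calc SGaux.hfun a k ≤ R^((k-p).toNat) * SGaux.hfun a p := hdist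
      _ ≤ R^W * SGaux.hfun a p := by
          apply mul_le_mul_of_nonneg_right _ (hhpos p).le
          exact pow_le_pow_right₀ (by linarith) hdW
    · have hkp : p - k ≤ (W:ℤ) := by linarith [hp.2]
      have hd : p = k + (((p-k).toNat:ℕ):ℤ) := by omega
      have hdW : (p-k).toNat ≤ W := by omega
      have hdist := (SGaux.hfun_dist a ha R hR haBound k ((p-k).toNat)).2
      rw [← hd] at hdist
      calc SGaux.hfun a k ≤ R^((p-k).toNat) * SGaux.hfun a p := hdist
      _ ≤ R^W * SGaux.hfun a p := by
          apply mul_le_mul_of_nonneg_right _ (hhpos p).le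
          exact pow_le_pow_right₀ (by linarith) hdW
  -- the convexity-type inequality for the block minima
  have hstar : ∀ t : ℤ, 8 * m t ≤ m (t-1) + m (t+1) := by
    intro t
    obtain ⟨p, hp, hep⟩ := Finset.exists_mem_eq_inf' (hne (t-1)) (SGaux.hfun a)
    obtain ⟨q, hq, heq⟩ := Finset.exists_mem_eq_inf' (hne (t+1)) (SGaux.hfun a)
    rw [Finset.mem_Icc] at hp hq
    have e1 : (t-1)*(W:ℤ)+(W:ℤ) = t*W := by ring
    have e2 : (t+1)*(W:ℤ) = t*W + W := by ring
    have e3 : (t+1)*(W:ℤ)+(W:ℤ) = t*W + 2*W := by ring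
    have hpt : p ≤ t*(W:ℤ) := by linarith [hp.2]
    have hqt : t*(W:ℤ)+W ≤ q := by linarith [hq.1]
    have hqp1 : (W:ℤ) ≤ q - p := by linarith
    have hqp3 : q - p ≤ 3*(W:ℤ) := by linarith [hq.2, hp.1]
    set N' : ℕ := (q-p).toNat with hN'
    have hN'c : ((N':ℕ):ℤ) = q - p := Int.toNat_of_nonneg (by linarith)
    have hN'1 : 1 ≤ N' := by omega
    have hMIi := hMI p N' hN'1
    have hpq : p + ((N':ℕ):ℤ) = q := by omega
    rw [SGaux.sum_range_to_Icc (SGaux.hfun a) p N', hpq] at hMIi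
    have hsub : Finset.Icc (t*(W:ℤ)+1) (t*(W:ℤ)+W) ⊆ Finset.Icc (p+1) q :=
      Finset.Icc_subset_Icc (by omega) (by linarith)
    have hmono : ∑ k ∈ Finset.Icc (t*(W:ℤ)+1) (t*(W:ℤ)+W), SGaux.hfun a k
        ≤ ∑ k ∈ Finset.Icc (p+1) q, SGaux.hfun a k :=
      Finset.sum_le_sum_of_subset_of_nonneg hsub (fun x _ _ => (hhpos x).le)
    have hcard : (Finset.Icc (t*(W:ℤ)+1) (t*(W:ℤ)+W)).card = W := by
      rw [Int.card_Icc]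
      have : t*(W:ℤ)+W+1 - (t*(W:ℤ)+1) = (W:ℤ) := by ring
      rw [this]
      omega
    have hlb : (W:ℝ) * m t ≤ ∑ k ∈ Finset.Icc (t*(W:ℤ)+1) (t*(W:ℤ)+W), SGaux.hfun a k := by
      have hterm : ∀ x ∈ Finset.Icc (t*(W:ℤ)+1) (t*(W:ℤ)+W), m t ≤ SGaux.hfun a x := by
        intro x hx
        rw [Finset.mem_Icc] at hx
        exact Finset.inf'_le (SGaux.hfun a) (Finset.mem_Icc.mpr ⟨by linarith [hx.1], by linarith [hx.2]⟩)
      have := Finset.card_nsmul_le_sum (Finset.Icc (t*(W:ℤ)+1) (t*(W:ℤ)+W)) (SGaux.hfun a) (m t) hterm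
      rwa [hcard, nsmul_eq_mul] at this
    have hNle : ((N':ℕ):ℝ) ≤ 3*(W:ℝ) := by
      have : (N':ℤ) ≤ 3*(W:ℤ) := by omega
      exact_mod_cast this
    have hrpow : ((N':ℕ):ℝ)^γ ≤ (3*(W:ℝ))^γ := Real.rpow_le_rpow (by positivity) hNle hγ0
    have hHp : m (t-1) = SGaux.hfun a p := hep
    have hHq : m (t+1) = SGaux.hfun a q := heq
    have hhsum : (0:ℝ) ≤ SGaux.hfun a p + SGaux.hfun a q := by
      have := hhpos p; have := hhpos q; linarith
    have hA : (W:ℝ) * m t ≤ L * (3*(W:ℝ))^γ * (m (t-1) + m (t+1)) := by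
      rw [hHp, hHq]
      calc (W:ℝ) * m t ≤ ∑ k ∈ Finset.Icc (p+1) q, SGaux.hfun a k := le_trans hlb hmono
      _ ≤ L * ((N':ℕ):ℝ)^γ * (SGaux.hfun a p + SGaux.hfun a q) := hMIi
      _ ≤ L * (3*(W:ℝ))^γ * (SGaux.hfun a p + SGaux.hfun a q) := by
          apply mul_le_mul_of_nonneg_right _ hhsum
          exact mul_le_mul_of_nonneg_left hrpow hL.le
    have hc : (0:ℝ) < L * (3*(W:ℝ))^γ := by positivity
    have h8c : (L * (3*(W:ℝ))^γ) * (8*m t) ≤ (L * (3*(W:ℝ))^γ) * (m (t-1) + m (t+1)) := by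
      nlinarith [hmpos t]
    have := le_of_mul_le_mul_left h8c hc
    linarith
  -- dynamics of block minima
  have hUpStar : ∀ t : ℤ, ¬(4*m t ≤ m (t+1)) → 4*m t ≤ m (t-1) := by
    intro t hnot
    rw [not_le] at hnot
    have := hstar t
    linarith
  have hUpClosed : ∀ t : ℤ, (4*m t ≤ m (t+1)) → 4*m (t+1) ≤ m (t+1+1) := by
    intro t hup
    by_contra hnot
    have h2 := hUpStar (t+1) hnot
    rw [show t+1-1 = t by ring] at h2
    nlinarith [hmpos t]
  have hUpAll : ∀ t : ℤ, (4*m t ≤ m (t+1)) → ∀ v, t ≤ v → 4*m v ≤ m (v+1) := by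
    intro t ht
    exact Int.le_induction ht (fun n _ hn => hUpClosed n hn)
  -- constants
  set lam := (4:ℝ) ^ (-((W:ℝ))⁻¹) with hlamdef
  have hlam : lam ∈ Set.Ioo (0:ℝ) 1 := SGaux.lam_mem W hW
  set E := R^W with hEdef
  have hEpos : (0:ℝ) < E := by positivity
  -- converters from block claims to cocycle bounds
  have mkStab : ∀ C1 : ℝ, 0 < C1 →
      ∀ (k:ℤ) (l:ℕ),
      (m (k/(W:ℤ)) * 4^(((k+l)/(W:ℤ) - k/(W:ℤ)).toNat) ≤ C1 * m ((k+l)/(W:ℤ))) →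
      |Phi1 a k l| ≤ (4*E*C1) * lam ^ l := by
    intro C1 hC1 k l hcl
    have hfp := SGaux.fin_stab_point (SGaux.hfun a) m W hW E C1 hEpos hC1 k l
      (hhpos (k+l)) (hmpos _).le (hmpos _).le (hm_ge k) (hm_le (k+l)) hcl
    have hphi : |Phi1 a k l| * SGaux.hfun a (k+l) = SGaux.hfun a k :=
      SGaux.hfun_phi a ha k l
    rw [← hlamdef] at hfp
    have h2 : |Phi1 a k l| * SGaux.hfun a (k+l)
        ≤ ((4*E*C1) * lam ^ l) * SGaux.hfun a (k+l) := by
      rw [hphi]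
      exact hfp
    exact le_of_mul_le_mul_right h2 (hhpos (k+l))
  have mkUnst : ∀ C2 : ℝ, 0 < C2 →
      ∀ (k:ℤ) (l:ℕ),
      (m ((k+l)/(W:ℤ)) * 4^(((k+l)/(W:ℤ) - k/(W:ℤ)).toNat) ≤ C2 * m (k/(W:ℤ))) →
      (4*E*C2)⁻¹ * lam ^ (-(l:ℤ)) ≤ |Phi1 a k l| := by
    intro C2 hC2 k l hcl
    have hfp := SGaux.fin_unst_point (SGaux.hfun a) m W hW E C2 hEpos hC2 k l
      (hhpos k) (hhpos (k+l)).le (hmpos _).le (hmpos _).le (hm_ge (k+l)) (hm_le k) hcl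
    have hphi : |Phi1 a k l| * SGaux.hfun a (k+l) = SGaux.hfun a k :=
      SGaux.hfun_phi a ha k l
    rw [← hlamdef] at hfp
    have h2 : ((4*E*C2)⁻¹ * lam ^ (-(l:ℤ))) * SGaux.hfun a (k+l)
        ≤ |Phi1 a k l| * SGaux.hfun a (k+l) := by
      rw [hphi]
      exact hfp
    exact le_of_mul_le_mul_right h2 (hhpos (k+l))
  have hdivpos : ∀ k : ℤ, 0 ≤ k → 0 ≤ k/(W:ℤ) := fun k hk => Int.ediv_nonneg hk hWZ.le
  have hdivneg : ∀ k : ℤ, k ≤ 0 → k/(W:ℤ) ≤ 0 := by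
    intro k hk
    have h1 : k/(W:ℤ) ≤ 0/(W:ℤ) := Int.ediv_le_ediv hWZ hk
    simpa using h1
  have hdivmono : ∀ (k:ℤ) (l:ℕ), k/(W:ℤ) ≤ (k+l)/(W:ℤ) :=
    fun k l => (SGaux.ediv_facts W hW k l).1
  -- case analysis on the global behaviour of the block minima
  by_cases hall : ∀ t : ℤ, 4*m t ≤ m (t+1)
  · -- everywhere rising : stable dichotomy on both half-axes
    have hclaim : ∀ u v : ℤ, u ≤ v → m u * 4^((v-u).toNat) ≤ 1 * m v := by
      intro u v huv
      have hg := SGaux.grow_aux m u (fun t _ => hall t) ((v-u).toNat) u le_rfl (hmpos u).le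
      rw [show u + (((v-u).toNat:ℕ):ℤ) = v by omega] at hg
      linarith
    have hbp : ∀ (k:ℤ) (l:ℕ), 0 ≤ k → 0 < l → |Phi1 a k l| ≤ (4*E*1) * lam ^ l :=
      fun k l _ _ => mkStab 1 one_pos k l (hclaim _ _ (hdivmono k l))
    have hbn : ∀ (k:ℤ) (l:ℕ), 0 < l → k + l ≤ 0 → |Phi1 a k l| ≤ (4*E*1) * lam ^ l :=
      fun k l _ _ => mkStab 1 one_pos k l (hclaim _ _ (hdivmono k l))
    refine ⟨fun _ => ⊤, fun _ => ⊥, fun _ => ⊤, fun _ => ⊥, ?_, ?_, by simp⟩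
    · exact SGaux.ed_pos_of_stable a ha (4*E*1) lam (by positivity) hlam hbp
    · exact SGaux.ed_neg_of_stable a ha (4*E*1) lam (by positivity) hlam hbn
  · push_neg at hall
    obtain ⟨s, hns⟩ := hall
    have hdown : ∀ t : ℤ, t ≤ s → 4*m t ≤ m (t-1) := by
      intro t hts
      apply hUpStar t
      intro hUpt
      have := hUpAll t hUpt s hts
      linarith
    -- unstable dichotomy on ℤ⁻
    obtain ⟨C2, hC2, hclaim2⟩ := SGaux.cb_fall m hmpos s hdown
    have hbn : ∀ (k:ℤ) (l:ℕ), 0 < l → k + l ≤ 0 →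
        (4*E*C2)⁻¹ * lam ^ (-(l:ℤ)) ≤ |Phi1 a k l| := by
      intro k l _ hkl
      exact mkUnst C2 hC2 k l (hclaim2 _ _ (hdivmono k l) (hdivneg _ hkl))
    have EDm : ExpDichNeg1 a (fun _ => (⊥ : Submodule ℝ ℝ)) (fun _ => ⊤) :=
      SGaux.ed_neg_of_unstable a ha (4*E*C2) lam (by positivity) hlam hbn
    by_cases hex : ∃ t : ℤ, 4*m t ≤ m (t+1)
    · -- there is a rising block : stable dichotomy on ℤ⁺
      obtain ⟨t₀, ht₀⟩ := hex
      obtain ⟨C1, hC1, hclaim1⟩ :=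
        SGaux.cb_rise m hmpos t₀ (fun t ht => hUpAll t₀ ht₀ t ht)
      have hbp : ∀ (k:ℤ) (l:ℕ), 0 ≤ k → 0 < l →
          |Phi1 a k l| ≤ (4*E*C1) * lam ^ l := by
        intro k l hk _
        exact mkStab C1 hC1 k l (hclaim1 _ _ (hdivpos k hk) (hdivmono k l))
      refine ⟨fun _ => ⊤, fun _ => ⊥, fun _ => ⊥, fun _ => ⊤, ?_, EDm, by simp⟩
      exact SGaux.ed_pos_of_stable a ha (4*E*C1) lam (by positivity) hlam hbp
    · -- nowhere rising : everywhere falling, unstable dichotomy on ℤ⁺ as well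
      push_neg at hex
      have hfallall : ∀ t : ℤ, 4*m t ≤ m (t-1) := by
        intro t
        apply hUpStar t
        rw [not_le]
        exact hex t
      have hclaimP : ∀ u v : ℤ, u ≤ v → m v * 4^((v-u).toNat) ≤ 1 * m u := by
        intro u v huv
        have hg := SGaux.fall_aux m v (fun t _ => hfallall t) ((v-u).toNat) v le_rfl (hmpos v).le
        rw [show v - (((v-u).toNat:ℕ):ℤ) = u by omega] at hg
        linarith
      have hbp : ∀ (k:ℤ) (l:ℕ), 0 ≤ k → 0 < l →
          (4*E*1)⁻¹ * lam ^ (-(l:ℤ)) ≤ |Phi1 a k l| := by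
        intro k l _ _
        exact mkUnst 1 one_pos k l (hclaimP _ _ (hdivmono k l))
      refine ⟨fun _ => ⊥, fun _ => ⊤, fun _ => ⊥, fun _ => ⊤, ?_, EDm, by simp⟩
      exact SGaux.ed_pos_of_unstable a ha (4*E*1) lam (by positivity) hlam hbp
end
end

section
/- Let R > 1 and let (a_n)_{n∈ℤ} be nonzero reals with 1/R < |a_n| < R for all n, and set λ_n = |a_n| and Π(k,l) = λ_k·λ_{k+1}·…·λ_{k+l−1} for k ∈ ℤ, l ≥ 1. If the sequence of linear maps A_n : ℝ → ℝ, A_n v = a_n v, has property SG(γ) for some γ ∈ (0,1), then there exists N ≥ 1 such that for every i ∈ ℤ, either Π(i,N) > 2 or Π(i+N,N) < 1/2. -/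
noncomputable section

/-- `Pi lam k l = lam_k ⋯ lam_{k+l-1}`. -/
def Pii (lam : ℤ → ℝ) (k : ℤ) (l : ℕ) : ℝ := ∏ j ∈ Finset.range l, lam (k + j)

/-!
If no `N` works, then for every `N` there is a window with `Π(i, N) ≤ 2` and `Π(i + N, N) ≥ 1/2`.
Forcing the system on `[i, i + 2N]` by the signs of the partial products `P_n = a_i ⋯ a_{i+n-1}`,
the normalized solution `g_n = v_{i+n} / P_n` increases by `1 / Π(i, n)` at each step, while SG
bounds `Π(i, n) |g_n|` by some `M ≲ N^γ`. These two facts make `|g|` grow by a factor `1 + 1/M`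
per step, forward from `N` when `g_N > 0` and backward from `N - 1` otherwise; comparing with the
bounds at the ends `0` and `2N` gives `(1 + 1/M)^N ≤ 8M`, impossible for large `N` because
`N^γ log N = o(N)`.
-/

open Filter Real

theorem Pii_zero (lam : ℤ → ℝ) (k : ℤ) : Pii lam k 0 = 1 := Finset.prod_range_zero _

theorem Pii_succ (lam : ℤ → ℝ) (k : ℤ) (n : ℕ) : Pii lam k (n + 1) = Pii lam k n * lam (k + n) :=
  Finset.prod_range_succ _ _

theorem Pii_add (lam : ℤ → ℝ) (k : ℤ) (m n : ℕ) :
    Pii lam k (m + n) = Pii lam k m * Pii lam (k + m) n := by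
  simp only [Pii, Finset.prod_range_add, Nat.cast_add, add_assoc]

theorem abs_Pii (a : ℤ → ℝ) (k : ℤ) (n : ℕ) : |Pii a k n| = Pii (fun j => |a j|) k n :=
  Finset.abs_prod _ _

theorem Pii_pos {lam : ℤ → ℝ} (h : ∀ n, 0 < lam n) (k : ℤ) (n : ℕ) : 0 < Pii lam k n :=
  Finset.prod_pos fun _ _ => h _

theorem Pii_ne_zero {a : ℤ → ℝ} (h : ∀ n, a n ≠ 0) (k : ℤ) (n : ℕ) : Pii a k n ≠ 0 :=
  Finset.prod_ne_zero_iff.2 fun _ _ => h _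

theorem SG1.exists_normalized_solution {a : ℤ → ℝ} {γ : ℝ} (hSG : SG1 a γ) (ha : ∀ n, a n ≠ 0) :
    ∃ L > 0, ∀ (i : ℤ) (N : ℕ), 1 ≤ N → ∃ g : ℕ → ℝ,
      (∀ n < N, g (n + 1) = g n + (Pii (fun k => |a k|) i (n + 1))⁻¹) ∧
      ∀ n ≤ N, Pii (fun k => |a k|) i n * |g n| ≤ L * N ^ γ := by
  obtain ⟨L, hL, hSG⟩ := hSG
  refine ⟨L, hL, fun i N hN => ?_⟩
  have hP := Pii_ne_zero ha i
  obtain ⟨v, hv, hvL⟩ := hSG i N hN (fun k => |Pii a i (k - i).toNat| / Pii a i (k - i).toNat)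
    fun k _ _ => by simp [abs_div, hP]
  -- `w` is the sign of the partial products `P_n = Pii a i n`, so `w_{i+n} / P_n = 1 / |P_n|`
  refine ⟨fun n => v (i + n) / Pii a i n, fun n hn => ?_, fun n hn => ?_⟩
  · have hrec := hv (i + n) (by omega) (by omega)
    have hw : (i + n + 1 - i).toNat = n + 1 := by omega
    simp only [← abs_Pii, Nat.cast_succ, ← add_assoc, hrec, hw]
    have hsign : |Pii a i (n + 1)| / Pii a i (n + 1) / Pii a i (n + 1) = |Pii a i (n + 1)|⁻¹ := by
      rw [div_div, ← sq, ← sq_abs, sq, div_mul_cancel_left₀ (abs_ne_zero.2 (hP _))]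
    rw [add_div, hsign, Pii_succ, mul_comm (Pii a i n), mul_div_mul_left _ _ (ha _)]
  · rw [← abs_Pii, abs_div, mul_div_cancel₀ _ (abs_ne_zero.2 (hP n))]
    exact hvL _ (by omega) (by omega)

theorem one_add_inv_mul_le_of_eq_add_inv {M q x y : ℝ} (hM : 0 < M) (hq : 0 < q)
    (hy : y = x + q⁻¹) (hqy : q * |y| ≤ M) :
    (1 + M⁻¹) * x ≤ y ∧ (1 + M⁻¹) * -y ≤ -x := by
  have hyq : |y| * M⁻¹ ≤ q⁻¹ := by
    rw [← div_eq_mul_inv, div_le_iff₀ hM, ← div_eq_inv_mul, le_div_iff₀' hq]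
    exact hqy
  have hxy : x ≤ y := by rw [hy]; linarith [inv_pos.2 hq]
  have hM' : 0 ≤ M⁻¹ := inv_nonneg.2 hM.le
  have hx : x * M⁻¹ ≤ |y| * M⁻¹ := by gcongr; exact hxy.trans (le_abs_self y)
  have hy' : -y * M⁻¹ ≤ |y| * M⁻¹ := by gcongr; exact neg_le_abs y
  constructor <;> linarith

theorem geom_le_rev {u : ℕ → ℝ} {c : ℝ} (hc : 0 ≤ c) (n : ℕ)
    (h : ∀ k < n, c * u (k + 1) ≤ u k) : c ^ n * u n ≤ u 0 := by
  simpa using geom_le (u := fun k => u (n - k)) hc n fun k hk => by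
    have hk' : n - k = n - (k + 1) + 1 := by omega
    simpa only [hk'] using h (n - (k + 1)) (by omega)

theorem one_add_inv_pow_le_of_recurrence {M : ℝ} (hM : 1 ≤ M) {N : ℕ} (hN : 1 ≤ N) {Q g : ℕ → ℝ}
    (hQ : ∀ n, 0 < Q n) (hQ0 : Q N ≤ 2 * Q 0) (hQ2N : Q N ≤ 2 * Q (2 * N))
    (hg : ∀ n < 2 * N, g (n + 1) = g n + (Q (n + 1))⁻¹)
    (hgM : ∀ n ≤ 2 * N, Q n * |g n| ≤ M) :
    (1 + M⁻¹) ^ N ≤ 8 * M := by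
  have hM0 : 0 < M := by linarith
  have hc0 : 0 ≤ 1 + M⁻¹ := by positivity
  have hc2 : 1 + M⁻¹ ≤ 2 := by linarith [inv_le_one_of_one_le₀ hM]
  have hstep (n : ℕ) (hn : n < 2 * N) :=
    one_add_inv_mul_le_of_eq_add_inv hM0 (hQ _) (hg n hn) (hgM (n + 1) (by omega))
  have hbound (n : ℕ) (hn : n ≤ 2 * N) (hQn : Q N ≤ 2 * Q n) : |g n| ≤ 2 * M * (Q N)⁻¹ := calc
    |g n| ≤ M / Q n := (le_div_iff₀' (hQ n)).2 (hgM n hn)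
    _ = 2 * M / (2 * Q n) := (mul_div_mul_left _ _ two_ne_zero).symm
    _ ≤ 2 * M / Q N := by gcongr; exact hQ N
    _ = 2 * M * (Q N)⁻¹ := div_eq_mul_inv _ _
  have hgN : g N = g (N - 1) + (Q N)⁻¹ := by
    simpa [Nat.sub_add_cancel hN] using hg (N - 1) (by omega)
  -- `g N - g (N - 1) = (Q N)⁻¹`, so `g N ≥ (Q N)⁻¹ / 2` or `-g (N - 1) > (Q N)⁻¹ / 2`
  rcases le_or_gt 0 (g (N - 1) + g N) with hsum | hsum
  · have hpos : 0 < g N := by linarith [inv_pos.2 (hQ N)]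
    have hgrow : (1 + M⁻¹) ^ N * g N ≤ g (2 * N) := by
      simpa [two_mul] using geom_le (u := fun k => g (N + k)) hc0 N
        fun k hk => (hstep (N + k) (by omega)).1
    have hend : g (2 * N) ≤ 4 * M * g N := calc
      g (2 * N) ≤ 2 * M * (Q N)⁻¹ := (le_abs_self _).trans (hbound _ le_rfl hQ2N)
      _ ≤ 2 * M * (2 * g N) := by gcongr; linarith
      _ = 4 * M * g N := by ring
    have : (1 + M⁻¹) ^ N ≤ 4 * M := le_of_mul_le_mul_right (hgrow.trans hend) hpos
    linarith
  · have hneg : 0 < -g (N - 1) := by linarith [inv_pos.2 (hQ N)]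
    have hgrow : (1 + M⁻¹) ^ (N - 1) * -g (N - 1) ≤ -g 0 :=
      geom_le_rev (u := fun k => -g k) hc0 (N - 1) fun k hk => (hstep k (by omega)).2
    have hend : -g 0 ≤ 4 * M * -g (N - 1) := calc
      -g 0 ≤ 2 * M * (Q N)⁻¹ := (neg_le_abs _).trans (hbound 0 (Nat.zero_le _) hQ0)
      _ ≤ 2 * M * (2 * -g (N - 1)) := by gcongr; linarith
      _ = 4 * M * -g (N - 1) := by ring
    have : (1 + M⁻¹) ^ (N - 1) ≤ 4 * M := le_of_mul_le_mul_right (hgrow.trans hend) hneg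
    calc (1 + M⁻¹) ^ N = (1 + M⁻¹) * (1 + M⁻¹) ^ (N - 1) := by
          rw [← pow_succ', Nat.sub_add_cancel hN]
      _ ≤ 2 * (4 * M) := by gcongr
      _ = 8 * M := by ring

theorem eventually_add_mul_log_lt_rpow (a b : ℝ) {s : ℝ} (hs : 0 < s) :
    ∀ᶠ x : ℝ in atTop, a + b * log x < x ^ s := by
  have hpow : Tendsto (fun x : ℝ => x ^ s) atTop atTop := tendsto_rpow_atTop hs
  have hlin : (fun x => a + b * log x) =o[atTop] fun x => x ^ s :=
    (Asymptotics.isLittleO_const_left.2 <| .inr <| tendsto_norm_atTop_atTop.comp hpow).add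
      ((isLittleO_log_rpow_atTop hs).const_mul_left b)
  filter_upwards [hlin.bound one_half_pos, hpow.eventually_gt_atTop 0] with x hx hxs
  rw [Real.norm_eq_abs, Real.norm_eq_abs, abs_of_pos hxs] at hx
  linarith [le_abs_self (a + b * log x)]

theorem inv_two_mul_le_log_one_add_inv {M : ℝ} (hM : 1 ≤ M) : (2 * M)⁻¹ ≤ log (1 + M⁻¹) := by
  have hM0 : 0 < M := by linarith
  calc (2 * M)⁻¹ ≤ (M + 1)⁻¹ := by gcongr; linarith
    _ = 1 - (1 + M⁻¹)⁻¹ := by field_simp; ring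
    _ ≤ log (1 + M⁻¹) := one_sub_inv_le_log_of_pos (by positivity)

theorem eventually_forall_mul_lt_one_add_inv_pow {C γ : ℝ} (hC : 0 < C) (hγ : γ < 1) :
    ∀ᶠ n : ℕ in atTop, ∀ M : ℝ, 1 ≤ M → M ≤ C * n ^ γ → 8 * M < (1 + M⁻¹) ^ n := by
  filter_upwards [tendsto_natCast_atTop_atTop.eventually
      (eventually_add_mul_log_lt_rpow (2 * C * log (8 * C)) (2 * C * γ) (sub_pos.2 hγ)),
    eventually_ge_atTop 1] with n hn hn1 M hM hMC
  have hn0 : (0 : ℝ) < n := by exact_mod_cast hn1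
  have hnγ : 0 < (n : ℝ) ^ γ := rpow_pos_of_pos hn0 γ
  have hlog : log (8 * M) < n * (2 * M)⁻¹ := calc
    log (8 * M) ≤ log (8 * C * n ^ γ) := log_le_log (by linarith) (by linarith)
    _ = log (8 * C) + γ * log n := by
      rw [log_mul (by positivity) hnγ.ne', log_rpow hn0]
    _ < n ^ (1 - γ) / (2 * C) := by
      rw [lt_div_iff₀ (by positivity)]; linarith
    _ = n * (2 * (C * n ^ γ))⁻¹ := by
      rw [rpow_sub hn0, rpow_one]; field_simp
    _ ≤ n * (2 * M)⁻¹ := by gcongr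
  calc 8 * M = exp (log (8 * M)) := (exp_log (by linarith)).symm
    _ < exp (n * (2 * M)⁻¹) := exp_lt_exp.2 hlog
    _ ≤ exp (n * log (1 + M⁻¹)) := by gcongr; exact inv_two_mul_le_log_one_add_inv hM
    _ = (1 + M⁻¹) ^ n := by rw [← log_pow, exp_log (by positivity)]

theorem one_dim_sublinear_growth_expansion_or_contraction_general
    (a : ℤ → ℝ) (ha : ∀ n : ℤ, a n ≠ 0)
    (lam : ℤ → ℝ) (hlam : ∀ n : ℤ, lam n = |a n|)
    (γ : ℝ) (hγ : γ ∈ Set.Ioo (0 : ℝ) 1) (hSG : SG1 a γ) :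
    ∃ N : ℕ, 1 ≤ N ∧ ∀ i : ℤ,
      Pii lam i N > 2 ∨ Pii lam (i + N) N < 1 / 2 := by
  obtain rfl : lam = fun n => |a n| := funext hlam
  obtain ⟨L, hL, hnormalized⟩ := hSG.exists_normalized_solution ha
  obtain ⟨N, hN, hN1⟩ := ((eventually_forall_mul_lt_one_add_inv_pow
    (C := (1 + L) * 2 ^ γ) (by positivity) hγ.2).and (eventually_ge_atTop 1)).exists
  refine ⟨N, hN1, fun i => ?_⟩
  by_contra! hPi
  obtain ⟨g, hg, hgL⟩ := hnormalized i (2 * N) (by omega)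
  have hQ := Pii_pos (fun n => abs_pos.2 (ha n)) i
  have h2Nγ : 1 ≤ ((2 * N : ℕ) : ℝ) ^ γ := one_le_rpow (by norm_cast; omega) hγ.1.le
  set M := 1 + L * ((2 * N : ℕ) : ℝ) ^ γ
  have hM1 : 1 ≤ M := by nlinarith
  have hMC : M ≤ (1 + L) * 2 ^ γ * N ^ γ := calc
    M ≤ (1 + L) * ((2 * N : ℕ) : ℝ) ^ γ := by linarith
    _ = (1 + L) * 2 ^ γ * N ^ γ := by
      rw [Nat.cast_mul, Nat.cast_two, mul_rpow zero_le_two (Nat.cast_nonneg _), mul_assoc]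
  have hQ0 : Pii (fun n => |a n|) i N ≤ 2 * Pii (fun n => |a n|) i 0 := by
    simpa [Pii_zero] using hPi.1
  have hQ2N : Pii (fun n => |a n|) i N ≤ 2 * Pii (fun n => |a n|) i (2 * N) := by
    rw [two_mul N, Pii_add]
    nlinarith [hQ N, hPi.2]
  exact (hN M hM1 hMC).not_ge <| one_add_inv_pow_le_of_recurrence hM1 hN1 hQ hQ0 hQ2N hg
    fun n hn => (hgL n hn).trans (by linarith)

/-- Lemma 6.3 ("lemSG8"): in the one-dimensional case, sublinear growth forces,
for some fixed N, strong expansion or strong contraction on every window. -/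
theorem one_dim_sublinear_growth_expansion_or_contraction
    (R : ℝ) (hR : 1 < R) (a : ℤ → ℝ) (ha : ∀ n : ℤ, a n ≠ 0)
    (haBound : ∀ n : ℤ, 1 / R < |a n| ∧ |a n| < R)
    (lam : ℤ → ℝ) (hlam : ∀ n : ℤ, lam n = |a n|)
    (γ : ℝ) (hγ : γ ∈ Set.Ioo (0 : ℝ) 1) (hSG : SG1 a γ) :
    ∃ N : ℕ, 1 ≤ N ∧ ∀ i : ℤ,
      Pii lam i N > 2 ∨ Pii lam (i + N) N < 1 / 2 :=
  one_dim_sublinear_growth_expansion_or_contraction_general a ha lam hlam γ hγ hSG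
end
end

section
/- Let g : ℝ → ℝ be defined by g(x) = x + x³. For all x, y ∈ ℝ and ε ≥ 0, if |x − y| ≥ ε then |g(x) − g(y)| ≥ ε + ε³/4. -/
/-- Lemma 7.1 ("lemx3"): the map `g(x) = x + x³` expands distances:
if `|x - y| ≥ ε` then `|g x - g y| ≥ ε + ε³/4`. -/
theorem cubic_map_expands (g : ℝ → ℝ) (hg : ∀ x : ℝ, g x = x + x ^ 3)
    (x y ε : ℝ) (hε : 0 ≤ ε) (h : |x - y| ≥ ε) :
    |g x - g y| ≥ ε + ε ^ 3 / 4 := by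
  have key : g x - g y = (x - y) * (1 + x ^ 2 + x * y + y ^ 2) := by
    rw [hg, hg]; ring
  have hpos : 0 < 1 + x ^ 2 + x * y + y ^ 2 := by nlinarith [sq_nonneg (x + y), sq_nonneg (x - y)]
  rw [key, abs_mul, abs_of_pos hpos]
  set a := |x - y| with ha
  have h2 : 1 + x ^ 2 + x * y + y ^ 2 ≥ 1 + a ^ 2 / 4 := by
    rw [ha, sq_abs]; nlinarith [sq_nonneg (x + y)]
  have h3 : a * (1 + x ^ 2 + x * y + y ^ 2) ≥ a * (1 + a ^ 2 / 4) :=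
    mul_le_mul_of_nonneg_left h2 (abs_nonneg _)
  have h4 : a * (1 + a ^ 2 / 4) ≥ ε * (1 + ε ^ 2 / 4) := by
    nlinarith [abs_nonneg (x - y), sq_nonneg (a - ε), sq_nonneg (a + ε), mul_nonneg hε hε]
  nlinarith
end

section
/- Let g : ℝ → ℝ be defined by g(x) = x + x³, let d > 0, and let (y_k)_{k ≤ 0} be reals with |y_{k+1} − g(y_k)| < d for all k ≤ −1 (a d-pseudotrajectory of g). Let (x_k)_{k ≤ 0} be the exact trajectory with x_0 = y_0, i.e. x_{k+1} = g(x_k) for k ≤ −1. Then |y_k − x_k| < 2 d^{1/3} for all k ≤ 0. -/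
/-- Proposition 7.3 ("propCase2"): a backward d-pseudotrajectory of
`g(x) = x + x³` stays within `2 d^{1/3}` of the exact backward trajectory
through its endpoint. -/
theorem backward_pseudotrajectory_shadowed
    (g : ℝ → ℝ) (hg : ∀ x : ℝ, g x = x + x ^ 3)
    (d : ℝ) (hd : 0 < d) (y x : ℤ → ℝ)
    (hy : ∀ k : ℤ, k ≤ -1 → |y (k + 1) - g (y k)| < d)
    (hx0 : x 0 = y 0)
    (hx : ∀ k : ℤ, k ≤ -1 → x (k + 1) = g (x k)) :
    ∀ k : ℤ, k ≤ 0 → |y k - x k| < 2 * d ^ ((1 : ℝ) / 3) := by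
  set ε : ℝ := 2 * d ^ ((1 : ℝ) / 3) with hε
  have hdp : (0:ℝ) < d ^ ((1:ℝ)/3) := Real.rpow_pos_of_pos hd _
  have hεpos : 0 < ε := by positivity
  have hcube : (d ^ ((1:ℝ)/3)) ^ (3:ℕ) = d := by
    rw [← Real.rpow_natCast (d ^ ((1:ℝ)/3)) 3, ← Real.rpow_mul hd.le]
    norm_num
  have hε3 : ε ^ 3 = 8 * d := by
    rw [hε, mul_pow, hcube]; ring
  have key : ∀ n : ℕ, |y (-(n:ℤ)) - x (-(n:ℤ))| < ε := by
    intro n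
    induction n with
    | zero => simpa [hx0] using hεpos
    | succ n ih =>
      set k : ℤ := -(n:ℤ) - 1 with hk
      have hkn : -((n+1 : ℕ):ℤ) = k := by push_cast [hk]; ring
      rw [hkn]
      have hk1 : k + 1 = -(n:ℤ) := by omega
      have hkle : k ≤ -1 := by omega
      by_contra hcon
      push_neg at hcon
      -- notation
      set a : ℝ := x k
      set b : ℝ := y k
      set t : ℝ := |b - a| with ht
      have htε : ε ≤ t := hcon
      have ht0 : 0 ≤ t := abs_nonneg _
      have hsq : t ^ 2 = (b - a) ^ 2 := sq_abs _
      -- |g b - g a| ≥ t + t³/4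
      have hfac : g b - g a = (b - a) * (1 + a^2 + a*b + b^2) := by
        rw [hg, hg]; ring
      have hfacpos : 0 ≤ 1 + a^2 + a*b + b^2 := by nlinarith [sq_nonneg (a+b), sq_nonneg (a-b)]
      have habs : |g b - g a| = t * (1 + a^2 + a*b + b^2) := by
        rw [hfac, abs_mul, abs_of_nonneg hfacpos]
      have hlow : t + t^3 / 4 ≤ |g b - g a| := by
        rw [habs]
        nlinarith [mul_nonneg ht0 (sq_nonneg (a+b))]
      -- trajectory relations
      have hxk : x (k+1) = g a := hx k hkle
      have hyk : |y (k+1) - g b| < d := hy k hkle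
      have ihk : |y (k+1) - x (k+1)| < ε := by rw [hk1]; exact ih
      have tri : |g b - g a| ≤ |y (k+1) - x (k+1)| + |y (k+1) - g b| := by
        have := abs_sub (y (k+1) - g a) (y (k+1) - g b)
        calc |g b - g a| = |(y (k+1) - g a) - (y (k+1) - g b)| := by ring_nf
          _ ≤ |y (k+1) - x (k+1)| + |y (k+1) - g b| := by
              rw [hxk]; exact abs_sub _ _
      have htcube : ε ^ 3 ≤ t ^ 3 := pow_le_pow_left₀ hεpos.le htε 3
      nlinarith [tri, hlow, hyk, ihk, htcube, hε3]
  intro k hk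
  have : k = -(((-k).toNat : ℕ) : ℤ) := by omega
  rw [this]; exact key _
end

section
/- Let g : ℝ → ℝ be defined by g(x) = x + x³, let d > 0, n ≥ 0, and let (y_k)_{0 ≤ k ≤ n} be reals with |y_{k+1} − g(y_k)| < d for 0 ≤ k ≤ n−1 (a d-pseudotrajectory of g). Let (x_k)_{0 ≤ k ≤ n} satisfy x_{k+1} = g(x_k) for 0 ≤ k ≤ n−1 and x_n = y_n. Then |y_{n−k} − x_{n−k}| ≤ d·k for all 0 ≤ k ≤ n. -/
/-- Proposition 7.5 ("propCase4"): a finite d-pseudotrajectory of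
`g(x) = x + x³` is shadowed backwards from its right endpoint with error
growing at most linearly. -/
theorem finite_pseudotrajectory_backward_linear_error
    (g : ℝ → ℝ) (hg : ∀ x : ℝ, g x = x + x ^ 3)
    (d : ℝ) (hd : 0 < d) (n : ℕ) (y x : ℕ → ℝ)
    (hy : ∀ k : ℕ, k + 1 ≤ n → |y (k + 1) - g (y k)| < d)
    (hx : ∀ k : ℕ, k + 1 ≤ n → x (k + 1) = g (x k))
    (hxn : x n = y n) :
    ∀ k : ℕ, k ≤ n → |y (n - k) - x (n - k)| ≤ d * k := by
  have exp : ∀ a b : ℝ, |a - b| ≤ |g a - g b| := by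
    intro a b
    rw [hg, hg]
    have h1 : a + a ^ 3 - (b + b ^ 3) = (a - b) * (1 + a ^ 2 + a * b + b ^ 2) := by ring
    rw [h1, abs_mul]
    have h2 : (1 : ℝ) ≤ 1 + a ^ 2 + a * b + b ^ 2 := by nlinarith [sq_nonneg (a + b), sq_nonneg a, sq_nonneg b]
    nlinarith [abs_nonneg (a - b), le_abs_self (1 + a ^ 2 + a * b + b ^ 2)]
  intro k
  induction k with
  | zero => intro _; simp [hxn]
  | succ k ih =>
    intro hk
    have hk' : k ≤ n := Nat.le_of_succ_le hk
    have ihk := ih hk'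
    set m := n - (k + 1) with hm
    have hm1 : m + 1 = n - k := by omega
    have hm1n : m + 1 ≤ n := by omega
    have h1 := hy m hm1n
    have h2 := hx m hm1n
    have key : |g (y m) - g (x m)| ≤ d * (k + 1) := by
      have : g (y m) - g (x m) = (g (y m) - y (m + 1)) + (y (m + 1) - x (m + 1)) := by
        rw [h2]; ring
      rw [this]
      calc |(g (y m) - y (m + 1)) + (y (m + 1) - x (m + 1))|
          ≤ |g (y m) - y (m + 1)| + |y (m + 1) - x (m + 1)| := abs_add_le _ _
        _ ≤ d + d * k := by
            rw [abs_sub_comm] at h1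
            rw [← hm1] at ihk
            exact add_le_add h1.le ihk
        _ = d * (k + 1) := by ring
    calc |y m - x m| ≤ |g (y m) - g (x m)| := exp _ _
      _ ≤ d * (k + 1) := key
      _ = d * ((k : ℕ) + 1 : ℕ) := by push_cast; ring
end
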